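/- arXiv:2205.00448 — 2 statements merged into one kernel-verified Lean document; each statement's English description precedes it below -/
import Mathlib

section
/- Let F, Λ, ar, ⟦·⟧ be a set functor with a finite modal signature interpreted by predicate liftings, over a countable set V of propositional variables. If the logic L(Λ) has one-step interpolation, then L(Λ) has uniform interpolation; moreover, for every finite V₁ ⊆ V, V₀ ⊆ V₁ and φ ∈ F(Λ, V₁) the uniform V₀-interpolant ρ can be chosen with rk(ρ) ≤ rk(φ). -/
open CategoryTheory

universe u v

/-- Propositional formulas over a type `Z` of atoms. -/
inductive PropForm (Z : Type v) : Type v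
  | bot : PropForm Z
  | atom : Z → PropForm Z
  | neg : PropForm Z → PropForm Z
  | and : PropForm Z → PropForm Z → PropForm Z

/-- Extension of a propositional formula under a valuation of atoms by subsets of `X`. -/
def PropForm.eval {Z : Type v} {X : Type u} (τ : Z → Set X) : PropForm Z → Set X
  | .bot => ∅
  | .atom z => τ z
  | .neg φ => (PropForm.eval τ φ)ᶜ
  | .and φ ψ => PropForm.eval τ φ ∩ PropForm.eval τ ψ

/-- Substitution of atoms in a propositional formula. -/
def PropForm.map {Z : Type v} {W : Type _} (f : Z → W) : PropForm Z → PropForm W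
  | .bot => .bot
  | .atom z => .atom (f z)
  | .neg φ => .neg (PropForm.map f φ)
  | .and φ ψ => .and (PropForm.map f φ) (PropForm.map f ψ)

/-- A finite modal signature for `F`, interpreted by predicate liftings: a finite type of
modalities with arities, each interpreted by a natural predicate lifting. -/
structure ModalSig (F : Type u ⥤ Type u) where
  Λ : Type
  finite : Finite Λ
  ar : Λ → ℕ
  lift : ∀ (m : Λ) (X : Type u), (Fin (ar m) → Set X) → Set (F.obj X)
  natural : ∀ (m : Λ) (X Y : Type u) (f : X → Y) (A : Fin (ar m) → Set Y),
    lift m X (fun i => f ⁻¹' A i) = F.map (TypeCat.ofHom f) ⁻¹' lift m Y A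

/-- `Prop(Λ(Z))`: propositional combinations of modal atoms `♥(z₁,…,z_{ar ♥})` over `Z`. -/
def OSF {F : Type u ⥤ Type u} (S : ModalSig F) (Z : Type v) : Type v :=
  PropForm ((m : S.Λ) × (Fin (S.ar m) → Z))

/-- Extension of a formula in `Prop(Λ(Z))` in `Set (F.obj X)`, given a valuation
`τ : Z → Set X`. -/
def OSF.ext {F : Type u ⥤ Type u} (S : ModalSig F) {Z : Type v} {X : Type u}
    (τ : Z → Set X) (φ : OSF S Z) : Set (F.obj X) :=
  PropForm.eval (fun a => S.lift a.1 X (fun i => τ (a.2 i))) φ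

/-- Substitution of the arguments of modalities in a formula in `Prop(Λ(Z))`. -/
def OSF.map {F : Type u ⥤ Type u} (S : ModalSig F) {Z W : Type _} (f : Z → W) :
    OSF S Z → OSF S W :=
  PropForm.map (fun a => ⟨a.1, fun i => f (a.2 i)⟩)

/-- A Boolean subalgebra of `Set X`. -/
def IsBoolSubalg {X : Type u} (𝔄 : Set (Set X)) : Prop :=
  ∅ ∈ 𝔄 ∧ Set.univ ∈ 𝔄 ∧ (∀ A ∈ 𝔄, Aᶜ ∈ 𝔄) ∧ (∀ A ∈ 𝔄, ∀ B ∈ 𝔄, A ∪ B ∈ 𝔄) ∧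
    (∀ A ∈ 𝔄, ∀ B ∈ 𝔄, A ∩ B ∈ 𝔄)

/-- Interpolable pairs of Boolean subalgebras. -/
def Interpolable {X : Type u} (𝔄₁ 𝔄₂ : Set (Set X)) : Prop :=
  ∀ A ∈ 𝔄₁, ∀ B ∈ 𝔄₂, A ⊆ B → ∃ C ∈ 𝔄₁ ∩ 𝔄₂, A ⊆ C ∧ C ⊆ B

/-- The logic `L(Λ)` has one-step interpolation: for interpolable finite Boolean
subalgebras `𝔄₁, 𝔄₂` and `φ ∈ Prop(Λ(𝔄₁))`, `ψ ∈ Prop(Λ(𝔄₂))` with `F X ⊨ φ → ψ`,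
there is an interpolant `ρ ∈ Prop(Λ(𝔄₁ ∩ 𝔄₂))`. -/
def OneStepInterpolation {F : Type u ⥤ Type u} (S : ModalSig F) : Prop :=
  ∀ (X : Type u) (𝔄₁ 𝔄₂ : Set (Set X)),
    IsBoolSubalg 𝔄₁ → IsBoolSubalg 𝔄₂ → 𝔄₁.Finite → 𝔄₂.Finite → Interpolable 𝔄₁ 𝔄₂ →
    ∀ (φ : OSF S ↥𝔄₁) (ψ : OSF S ↥𝔄₂),
      OSF.ext S (Subtype.val : ↥𝔄₁ → Set X) φ ⊆ OSF.ext S (Subtype.val : ↥𝔄₂ → Set X) ψ →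
      ∃ ρ : OSF S ↥(𝔄₁ ∩ 𝔄₂),
        OSF.ext S (Subtype.val : ↥𝔄₁ → Set X) φ
          ⊆ OSF.ext S (Subtype.val : ↥(𝔄₁ ∩ 𝔄₂) → Set X) ρ ∧
        OSF.ext S (Subtype.val : ↥(𝔄₁ ∩ 𝔄₂) → Set X) ρ
          ⊆ OSF.ext S (Subtype.val : ↥𝔄₂ → Set X) ψ

/-- The logic `L(Λ)` has uniform one-step interpolation: for finite Boolean subalgebras
`𝔄₀ ⊆ 𝔄₁` and `φ ∈ Prop(Λ(𝔄₁))` there is a single `ρ ∈ Prop(Λ(𝔄₀))` with `F X ⊨ φ → ρ`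
interpolating for every `ψ` over an `𝔄₂` interpolable with `𝔄₁` with `𝔄₁ ∩ 𝔄₂ ⊆ 𝔄₀`. -/
def UniformOneStepInterpolation {F : Type u ⥤ Type u} (S : ModalSig F) : Prop :=
  ∀ (X : Type u) (𝔄₀ 𝔄₁ : Set (Set X)),
    IsBoolSubalg 𝔄₀ → IsBoolSubalg 𝔄₁ → 𝔄₀.Finite → 𝔄₁.Finite → 𝔄₀ ⊆ 𝔄₁ →
    ∀ φ : OSF S ↥𝔄₁, ∃ ρ : OSF S ↥𝔄₀,
      OSF.ext S (Subtype.val : ↥𝔄₁ → Set X) φ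
        ⊆ OSF.ext S (Subtype.val : ↥𝔄₀ → Set X) ρ ∧
      ∀ 𝔄₂ : Set (Set X), IsBoolSubalg 𝔄₂ → 𝔄₂.Finite → Interpolable 𝔄₁ 𝔄₂ →
        𝔄₁ ∩ 𝔄₂ ⊆ 𝔄₀ →
        ∀ ψ : OSF S ↥𝔄₂,
          OSF.ext S (Subtype.val : ↥𝔄₁ → Set X) φ
            ⊆ OSF.ext S (Subtype.val : ↥𝔄₂ → Set X) ψ →
          OSF.ext S (Subtype.val : ↥𝔄₀ → Set X) ρ
            ⊆ OSF.ext S (Subtype.val : ↥𝔄₂ → Set X) ψ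

/-- Modal `Λ`-formulas over propositional variables `V`. -/
inductive MForm {F : Type u ⥤ Type u} (S : ModalSig F) (V : Type) : Type
  | var : V → MForm S V
  | bot : MForm S V
  | neg : MForm S V → MForm S V
  | and : MForm S V → MForm S V → MForm S V
  | mod : (m : S.Λ) → (Fin (S.ar m) → MForm S V) → MForm S V

/-- The rank of a modal formula: maximal nesting depth of modal operators. -/
def MForm.rk {F : Type u ⥤ Type u} {S : ModalSig F} {V : Type} : MForm S V → ℕ
  | .var _ => 0
  | .bot => 0
  | .neg φ => φ.rk
  | .and φ ψ => max φ.rk ψ.rk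
  | .mod _ args => 1 + Finset.univ.sup (fun i => (args i).rk)

/-- The formula mentions only propositional variables from `V₀`. -/
def MForm.varsIn {F : Type u ⥤ Type u} {S : ModalSig F} {V : Type} (V₀ : Set V) :
    MForm S V → Prop
  | .var v => v ∈ V₀
  | .bot => True
  | .neg φ => φ.varsIn V₀
  | .and φ ψ => φ.varsIn V₀ ∧ ψ.varsIn V₀
  | .mod _ args => ∀ i, (args i).varsIn V₀

/-- An `F`-model: a coalgebra with a valuation of the propositional variables. -/
structure CModel (F : Type u ⥤ Type u) (V : Type) : Type (u + 1) where
  X : Type u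
  ξ : X → F.obj X
  τ : V → Set X

/-- The extension (semantics) of a modal formula in a model. -/
def MForm.sem {F : Type u ⥤ Type u} {S : ModalSig F} {V : Type} (M : CModel F V) :
    MForm S V → Set M.X
  | .var v => M.τ v
  | .bot => ∅
  | .neg φ => (φ.sem M)ᶜ
  | .and φ ψ => φ.sem M ∩ ψ.sem M
  | .mod m args => {x | M.ξ x ∈ S.lift m M.X (fun i => (args i).sem M)}

/-! ### Auxiliary development -/

open Classical in
noncomputable def pb (p : Prop) : Bool := decide p

lemma pb_iff (p : Prop) : pb p = true ↔ p := by
  unfold pb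
  exact Iff.of_eq (@decide_eq_true_eq p (Classical.propDecidable p))

namespace UIP

variable {F : Type u ⥤ Type u} {S : ModalSig F} {V : Type}

/-- Semantic consequence. -/
def Imp (φ ψ : MForm S V) : Prop := ∀ M : CModel F V, φ.sem M ⊆ ψ.sem M

/-- Semantic equivalence. -/
def Eqv (φ ψ : MForm S V) : Prop := ∀ M : CModel F V, φ.sem M = ψ.sem M

lemma Eqv.refl (φ : MForm S V) : Eqv φ φ := fun _ => rfl

lemma Eqv.symm {φ ψ : MForm S V} (h : Eqv φ ψ) : Eqv ψ φ := fun M => (h M).symm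

lemma Eqv.trans {φ ψ χ : MForm S V} (h : Eqv φ ψ) (h' : Eqv ψ χ) : Eqv φ χ :=
  fun M => (h M).trans (h' M)

lemma Eqv.neg {φ ψ : MForm S V} (h : Eqv φ ψ) : Eqv (MForm.neg φ) (MForm.neg ψ) := by
  intro M; show (φ.sem M)ᶜ = (ψ.sem M)ᶜ; rw [h M]

lemma Eqv.and {φ ψ φ' ψ' : MForm S V} (h : Eqv φ φ') (h' : Eqv ψ ψ') :
    Eqv (MForm.and φ ψ) (MForm.and φ' ψ') := by
  intro M; show φ.sem M ∩ ψ.sem M = φ'.sem M ∩ ψ'.sem M; rw [h M, h' M]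

lemma Eqv.mod {m : S.Λ} {args args' : Fin (S.ar m) → MForm S V}
    (h : ∀ i, Eqv (args i) (args' i)) : Eqv (MForm.mod m args) (MForm.mod m args') := by
  intro M
  show {x | M.ξ x ∈ S.lift m M.X fun i => (args i).sem M}
      = {x | M.ξ x ∈ S.lift m M.X fun i => (args' i).sem M}
  have : (fun i => (args i).sem M) = fun i => (args' i).sem M := funext fun i => h i M
  rw [this]

/-- vars monotonicity -/
lemma varsIn_mono {W W' : Set V} (h : W ⊆ W') :
    ∀ φ : MForm S V, φ.varsIn W → φ.varsIn W'
  | .var v, hv => h hv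
  | .bot, _ => trivial
  | .neg φ, hv => varsIn_mono h φ hv
  | .and φ ψ, hv => ⟨varsIn_mono h φ hv.1, varsIn_mono h ψ hv.2⟩
  | .mod _ args, hv => fun i => varsIn_mono h (args i) (hv i)

/-- The set of variables of a formula. -/
def varsOf : MForm S V → Set V
  | .var v => {v}
  | .bot => ∅
  | .neg φ => varsOf φ
  | .and φ ψ => varsOf φ ∪ varsOf ψ
  | .mod _ args => ⋃ i, varsOf (args i)

lemma varsOf_finite : ∀ φ : MForm S V, (varsOf φ).Finite
  | .var v => Set.finite_singleton v
  | .bot => Set.finite_empty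
  | .neg φ => varsOf_finite φ
  | .and φ ψ => (varsOf_finite φ).union (varsOf_finite ψ)
  | .mod _ args => Set.finite_iUnion fun i => varsOf_finite (args i)

lemma varsIn_varsOf : ∀ φ : MForm S V, φ.varsIn (varsOf φ)
  | .var v => rfl
  | .bot => trivial
  | .neg φ => varsIn_varsOf φ
  | .and φ ψ => ⟨varsIn_mono Set.subset_union_left φ (varsIn_varsOf φ),
      varsIn_mono Set.subset_union_right ψ (varsIn_varsOf ψ)⟩
  | .mod _ args => fun i =>
      varsIn_mono (Set.subset_iUnion (fun j => varsOf (args j)) i) (args i) (varsIn_varsOf (args i))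

lemma varsOf_subset {W : Set V} : ∀ φ : MForm S V, φ.varsIn W → varsOf φ ⊆ W
  | .var v, hv => by simpa [varsOf, MForm.varsIn] using hv
  | .bot, _ => by simp [varsOf]
  | .neg φ, hv => varsOf_subset φ hv
  | .and φ ψ, hv => Set.union_subset (varsOf_subset φ hv.1) (varsOf_subset ψ hv.2)
  | .mod _ args, hv => Set.iUnion_subset fun i => varsOf_subset (args i) (hv i)

/-- Semantics only depends on the valuation of the variables of the formula. -/
lemma sem_congr {W : Set V} {X : Type u} (ξ : X → F.obj X) (τ τ' : V → Set X)
    (hτ : ∀ v ∈ W, τ v = τ' v) :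
    ∀ φ : MForm S V, φ.varsIn W →
      φ.sem (⟨X, ξ, τ⟩ : CModel F V) = φ.sem (⟨X, ξ, τ'⟩ : CModel F V)
  | .var v, hv => hτ v hv
  | .bot, _ => rfl
  | .neg φ, hv => by
      simp only [MForm.sem]; rw [sem_congr ξ τ τ' hτ φ hv]
  | .and φ ψ, hv => by
      simp only [MForm.sem]
      rw [sem_congr ξ τ τ' hτ φ hv.1, sem_congr ξ τ τ' hτ ψ hv.2]
  | .mod m args, hv => by
      simp only [MForm.sem]
      have : (fun i => (args i).sem (⟨X, ξ, τ⟩ : CModel F V))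
          = fun i => (args i).sem (⟨X, ξ, τ'⟩ : CModel F V) :=
        funext fun i => sem_congr ξ τ τ' hτ (args i) (hv i)
      rw [this]

/-- Pullback of semantics along a coalgebra-model morphism. -/
lemma sem_pullback {M N : CModel F V} (f : M.X → N.X)
    (hτ : ∀ v, M.τ v = f ⁻¹' N.τ v)
    (hξ : ∀ x, N.ξ (f x) = F.map (TypeCat.ofHom f) (M.ξ x)) :
    ∀ γ : MForm S V, γ.sem M = f ⁻¹' γ.sem N
  | .var v => hτ v
  | .bot => rfl
  | .neg γ => by
      show (γ.sem M)ᶜ = f ⁻¹' (γ.sem N)ᶜ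
      rw [sem_pullback f hτ hξ γ]; rfl
  | .and γ δ => by
      show γ.sem M ∩ δ.sem M = f ⁻¹' (γ.sem N ∩ δ.sem N)
      rw [sem_pullback f hτ hξ γ, sem_pullback f hτ hξ δ]; rfl
  | .mod m args => by
      show {x | M.ξ x ∈ S.lift m M.X fun i => (args i).sem M}
        = f ⁻¹' {x | N.ξ x ∈ S.lift m N.X fun i => (args i).sem N}
      have h1 : (fun i => (args i).sem M) = fun i => f ⁻¹' (args i).sem N :=
        funext fun i => sem_pullback f hτ hξ (args i)
      rw [h1, S.natural m M.X N.X f]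
      ext x
      simp only [Set.mem_setOf_eq, Set.mem_preimage, hξ x]

end UIP
namespace UIP

variable {F : Type u ⥤ Type u} {S : ModalSig F} {V : Type}

/-! ### list conjunction/disjunction of modal formulas -/

def mtop : MForm S V := .neg .bot

def mor (φ ψ : MForm S V) : MForm S V := .neg (.and (.neg φ) (.neg ψ))

def conjList : List (MForm S V) → MForm S V
  | [] => mtop
  | φ :: l => .and φ (conjList l)

def disjList : List (MForm S V) → MForm S V
  | [] => .bot
  | φ :: l => mor φ (disjList l)

lemma mor_sem (M : CModel F V) (φ ψ : MForm S V) (x : M.X) :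
    x ∈ (mor φ ψ).sem M ↔ x ∈ φ.sem M ∨ x ∈ ψ.sem M := by
  simp only [mor, MForm.sem, Set.mem_compl_iff, Set.mem_inter_iff]
  tauto

lemma conjList_sem (M : CModel F V) (x : M.X) :
    ∀ l : List (MForm S V), (x ∈ (conjList l).sem M ↔ ∀ φ ∈ l, x ∈ φ.sem M)
  | [] => by
      simp only [conjList, mtop, MForm.sem, Set.mem_compl_iff, Set.mem_empty_iff_false]
      simp
  | φ :: l => by
      simp only [conjList, MForm.sem, Set.mem_inter_iff, conjList_sem M x l, List.mem_cons]
      constructor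
      · rintro ⟨h1, h2⟩ ψ (rfl | hψ); exact h1; exact h2 _ hψ
      · intro h; exact ⟨h φ (Or.inl rfl), fun ψ hψ => h ψ (Or.inr hψ)⟩

lemma disjList_sem (M : CModel F V) (x : M.X) :
    ∀ l : List (MForm S V), (x ∈ (disjList l).sem M ↔ ∃ φ ∈ l, x ∈ φ.sem M)
  | [] => by simp [disjList, MForm.sem]
  | φ :: l => by
      simp only [disjList, mor_sem, disjList_sem M x l, List.mem_cons]
      constructor
      · rintro (h | ⟨ψ, hψ, hx⟩); exact ⟨φ, Or.inl rfl, h⟩; exact ⟨ψ, Or.inr hψ, hx⟩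
      · rintro ⟨ψ, (rfl | hψ), hx⟩; exact Or.inl hx; exact Or.inr ⟨ψ, hψ, hx⟩

lemma rk_mor (φ ψ : MForm S V) : (mor φ ψ).rk = max φ.rk ψ.rk := rfl

lemma conjList_rk {n : ℕ} : ∀ l : List (MForm S V), (∀ φ ∈ l, φ.rk ≤ n) → (conjList l).rk ≤ n
  | [], _ => Nat.zero_le n
  | φ :: l, h => by
      simp only [conjList, MForm.rk, max_le_iff]
      exact ⟨h φ (List.mem_cons_self), conjList_rk l fun ψ hψ => h ψ (List.mem_cons_of_mem _ hψ)⟩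

lemma disjList_rk {n : ℕ} : ∀ l : List (MForm S V), (∀ φ ∈ l, φ.rk ≤ n) → (disjList l).rk ≤ n
  | [], _ => Nat.zero_le n
  | φ :: l, h => by
      simp only [disjList, rk_mor, max_le_iff]
      exact ⟨h φ (List.mem_cons_self), disjList_rk l fun ψ hψ => h ψ (List.mem_cons_of_mem _ hψ)⟩

lemma conjList_vars {W : Set V} : ∀ l : List (MForm S V),
    (∀ φ ∈ l, φ.varsIn W) → (conjList l).varsIn W
  | [], _ => trivial
  | φ :: l, h =>
      ⟨h φ (List.mem_cons_self), conjList_vars l fun ψ hψ => h ψ (List.mem_cons_of_mem _ hψ)⟩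

lemma disjList_vars {W : Set V} : ∀ l : List (MForm S V),
    (∀ φ ∈ l, φ.varsIn W) → (disjList l).varsIn W
  | [], _ => trivial
  | φ :: l, h =>
      show φ.varsIn W ∧ (disjList l).varsIn W from
      ⟨h φ (List.mem_cons_self), disjList_vars l fun ψ hψ => h ψ (List.mem_cons_of_mem _ hψ)⟩

/-! ### rank-0 formulas -/

def pholds (g : V → Prop) : MForm S V → Prop
  | .var v => g v
  | .bot => False
  | .neg φ => ¬ pholds g φ
  | .and φ ψ => pholds g φ ∧ pholds g ψ
  | .mod _ _ => True

lemma rk_zero_sem (M : CModel F V) (x : M.X) :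
    ∀ φ : MForm S V, φ.rk = 0 → (x ∈ φ.sem M ↔ pholds (fun v => x ∈ M.τ v) φ)
  | .var v, _ => Iff.rfl
  | .bot, _ => Iff.rfl
  | .neg φ, h => by
      simp only [MForm.sem, Set.mem_compl_iff, pholds]
      exact not_congr (rk_zero_sem M x φ h)
  | .and φ ψ, h => by
      have h' : φ.rk = 0 ∧ ψ.rk = 0 := by
        simp only [MForm.rk, Nat.max_eq_zero_iff] at h; exact h
      simp only [MForm.sem, Set.mem_inter_iff, pholds]
      exact and_congr (rk_zero_sem M x φ h'.1) (rk_zero_sem M x ψ h'.2)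
  | .mod m args, h => by
      exfalso; simp only [MForm.rk] at h; omega

lemma pholds_congr {W : Set V} (g g' : V → Prop) (hg : ∀ v ∈ W, (g v ↔ g' v)) :
    ∀ φ : MForm S V, φ.varsIn W → (pholds g φ ↔ pholds g' φ)
  | .var v, hv => hg v hv
  | .bot, _ => Iff.rfl
  | .neg φ, hv => not_congr (pholds_congr g g' hg φ hv)
  | .and φ ψ, hv => and_congr (pholds_congr g g' hg φ hv.1) (pholds_congr g g' hg ψ hv.2)
  | .mod _ _, _ => Iff.rfl

/-! ### top-level substitution and one-step structure -/

def topSubst (u : V → Bool) : MForm S V → MForm S V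
  | .var v => if u v then mtop else .bot
  | .bot => .bot
  | .neg φ => .neg (topSubst u φ)
  | .and φ ψ => .and (topSubst u φ) (topSubst u ψ)
  | .mod m args => .mod m args

lemma topSubst_sem {W : Set V} (M : CModel F V) (x : M.X) (u : V → Bool) :
    ∀ φ : MForm S V, φ.varsIn W → (∀ p ∈ W, (x ∈ M.τ p ↔ u p = true)) →
      (x ∈ φ.sem M ↔ x ∈ (topSubst u φ).sem M)
  | .var v, hv, hu => by
      by_cases h : u v = true
      · simp only [topSubst, if_pos h, mtop, MForm.sem]
        simpa [(hu v hv)] using h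
      · simp only [topSubst, if_neg h, MForm.sem]
        simp only [Bool.not_eq_true] at h
        simp [hu v hv, h]
  | .bot, _, _ => Iff.rfl
  | .neg φ, hv, hu => by
      simp only [topSubst, MForm.sem, Set.mem_compl_iff]
      exact not_congr (topSubst_sem M x u φ hv hu)
  | .and φ ψ, hv, hu => by
      simp only [topSubst, MForm.sem, Set.mem_inter_iff]
      exact and_congr (topSubst_sem M x u φ hv.1 hu) (topSubst_sem M x u ψ hv.2 hu)
  | .mod _ _, _, _ => Iff.rfl

def NoTopVar : MForm S V → Prop
  | .var _ => False
  | .bot => True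
  | .neg φ => NoTopVar φ
  | .and φ ψ => NoTopVar φ ∧ NoTopVar ψ
  | .mod _ _ => True

lemma noTopVar_topSubst (u : V → Bool) : ∀ φ : MForm S V, NoTopVar (topSubst u φ)
  | .var v => by by_cases h : u v = true <;> simp [topSubst, h, mtop, NoTopVar]
  | .bot => trivial
  | .neg φ => noTopVar_topSubst u φ
  | .and φ ψ => ⟨noTopVar_topSubst u φ, noTopVar_topSubst u ψ⟩
  | .mod _ _ => trivial

/-- Atom type of one-step formulas. -/
abbrev OAtom (S : ModalSig F) (Z : Type v) := (m : S.Λ) × (Fin (S.ar m) → Z)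

def AllAtoms {Z : Type v} (p : OAtom S Z → Prop) : OSF S Z → Prop
  | .bot => True
  | .atom a => p a
  | .neg φ => AllAtoms p φ
  | .and φ ψ => AllAtoms p φ ∧ AllAtoms p ψ

lemma allAtoms_of_forall {Z : Type v} {p : OAtom S Z → Prop} (h : ∀ a, p a) :
    ∀ P : OSF S Z, AllAtoms p P
  | .bot => trivial
  | .atom a => h a
  | .neg φ => allAtoms_of_forall h φ
  | .and φ ψ => ⟨allAtoms_of_forall h φ, allAtoms_of_forall h ψ⟩

lemma allAtoms_map {Z W : Type _} {p : OAtom S W → Prop} (f : Z → W) :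
    ∀ P : OSF S Z, AllAtoms (fun a : OAtom S Z => p ⟨a.1, fun i => f (a.2 i)⟩) P →
      AllAtoms p (OSF.map S f P)
  | .bot, _ => trivial
  | .atom a, h => h
  | .neg φ, h => allAtoms_map f φ h
  | .and φ ψ, h => ⟨allAtoms_map f φ h.1, allAtoms_map f ψ h.2⟩

def m2osf : MForm S V → OSF S (MForm S V)
  | .var _ => .bot
  | .bot => .bot
  | .neg φ => .neg (m2osf φ)
  | .and φ ψ => .and (m2osf φ) (m2osf ψ)
  | .mod m args => .atom ⟨m, args⟩

def osf2m : OSF S (MForm S V) → MForm S V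
  | .bot => .bot
  | .atom a => .mod a.1 a.2
  | .neg P => .neg (osf2m P)
  | .and P Q => .and (osf2m P) (osf2m Q)

lemma m2osf_sem (M : CModel F V) (x : M.X) :
    ∀ φ : MForm S V, NoTopVar φ →
      (x ∈ φ.sem M ↔ M.ξ x ∈ OSF.ext S (fun γ : MForm S V => γ.sem M) (m2osf φ))
  | .var _, h => absurd h not_false
  | .bot, _ => by simp [MForm.sem, m2osf, OSF.ext, PropForm.eval]
  | .neg φ, h => by
      simp only [MForm.sem, m2osf, OSF.ext, PropForm.eval, Set.mem_compl_iff]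
      exact not_congr (m2osf_sem M x φ h)
  | .and φ ψ, h => by
      simp only [MForm.sem, m2osf, OSF.ext, PropForm.eval, Set.mem_inter_iff]
      exact and_congr (m2osf_sem M x φ h.1) (m2osf_sem M x ψ h.2)
  | .mod m args, _ => Iff.rfl

lemma osf2m_sem (M : CModel F V) (x : M.X) :
    ∀ P : OSF S (MForm S V),
      (x ∈ (osf2m P).sem M ↔ M.ξ x ∈ OSF.ext S (fun γ : MForm S V => γ.sem M) P)
  | .bot => by simp [MForm.sem, osf2m, OSF.ext, PropForm.eval]
  | .atom a => Iff.rfl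
  | .neg P => by
      simp only [MForm.sem, osf2m, OSF.ext, PropForm.eval, Set.mem_compl_iff]
      exact not_congr (osf2m_sem M x P)
  | .and P Q => by
      simp only [MForm.sem, osf2m, OSF.ext, PropForm.eval, Set.mem_inter_iff]
      exact and_congr (osf2m_sem M x P) (osf2m_sem M x Q)

lemma rk_mod_le_iff {m : S.Λ} {args : Fin (S.ar m) → MForm S V} {k : ℕ} :
    (MForm.mod m args).rk ≤ k + 1 ↔ ∀ i, (args i).rk ≤ k := by
  simp only [MForm.rk]
  rw [show k + 1 = 1 + k from Nat.add_comm k 1, Nat.add_le_add_iff_left, Finset.sup_le_iff]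
  simp

lemma osf2m_rk {k : ℕ} : ∀ P : OSF S (MForm S V),
    AllAtoms (fun a : OAtom S (MForm S V) => ∀ i, (a.2 i).rk ≤ k) P → (osf2m P).rk ≤ k + 1
  | .bot, _ => Nat.zero_le _
  | .atom a, h => rk_mod_le_iff.2 h
  | .neg P, h => osf2m_rk P h
  | .and P Q, h => by
      simp only [osf2m, MForm.rk, max_le_iff]
      exact ⟨osf2m_rk P h.1, osf2m_rk Q h.2⟩

lemma osf2m_vars {W : Set V} : ∀ P : OSF S (MForm S V),
    AllAtoms (fun a : OAtom S (MForm S V) => ∀ i, (a.2 i).varsIn W) P → (osf2m P).varsIn W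
  | .bot, _ => trivial
  | .atom a, h => h
  | .neg P, h => osf2m_vars P h
  | .and P Q, h => ⟨osf2m_vars P h.1, osf2m_vars Q h.2⟩

lemma allAtoms_m2osf_topSubst {W : Set V} {k : ℕ} (u : V → Bool) :
    ∀ φ : MForm S V, φ.varsIn W → φ.rk ≤ k + 1 →
      AllAtoms (fun a : OAtom S (MForm S V) => ∀ i, (a.2 i).varsIn W ∧ (a.2 i).rk ≤ k)
        (m2osf (topSubst u φ))
  | .var v, _, _ => by
      by_cases h : u v = true <;> simp [topSubst, h, mtop, m2osf, AllAtoms]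
  | .bot, _, _ => trivial
  | .neg φ, hv, hr => allAtoms_m2osf_topSubst u φ hv hr
  | .and φ ψ, hv, hr => by
      simp only [MForm.rk, max_le_iff] at hr
      exact ⟨allAtoms_m2osf_topSubst u φ hv.1 hr.1, allAtoms_m2osf_topSubst u ψ hv.2 hr.2⟩
  | .mod m args, hv, hr => fun i => ⟨hv i, rk_mod_le_iff.1 hr i⟩

/-! ### OSF extension lemmas -/

lemma ext_map {Z W : Type _} {X : Type u} (f : Z → W) (τ : W → Set X) :
    ∀ P : OSF S Z, OSF.ext S τ (OSF.map S f P) = OSF.ext S (fun z => τ (f z)) P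
  | .bot => rfl
  | .atom a => rfl
  | .neg P => by
      show (OSF.ext S τ (OSF.map S f P))ᶜ = (OSF.ext S (fun z => τ (f z)) P)ᶜ
      rw [ext_map f τ P]
  | .and P Q => by
      show OSF.ext S τ (OSF.map S f P) ∩ OSF.ext S τ (OSF.map S f Q)
          = OSF.ext S (fun z => τ (f z)) P ∩ OSF.ext S (fun z => τ (f z)) Q
      rw [ext_map f τ P, ext_map f τ Q]

lemma ext_congr {Z : Type _} {X : Type u} {τ τ' : Z → Set X} :
    ∀ P : OSF S Z, AllAtoms (fun a : OAtom S Z => ∀ i, τ (a.2 i) = τ' (a.2 i)) P →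
      OSF.ext S τ P = OSF.ext S τ' P
  | .bot, _ => rfl
  | .atom a, h => by
      show S.lift a.1 X (fun i => τ (a.2 i)) = S.lift a.1 X (fun i => τ' (a.2 i))
      rw [funext h]
  | .neg P, h => by
      show (OSF.ext S τ P)ᶜ = (OSF.ext S τ' P)ᶜ
      rw [ext_congr P h]
  | .and P Q, h => by
      show OSF.ext S τ P ∩ OSF.ext S τ Q = OSF.ext S τ' P ∩ OSF.ext S τ' Q
      rw [ext_congr P h.1, ext_congr Q h.2]

lemma ext_natural {Z : Type _} {Xm Xn : Type u} (f : Xm → Xn)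
    (τM : Z → Set Xm) (τN : Z → Set Xn) :
    ∀ P : OSF S Z, AllAtoms (fun a : OAtom S Z => ∀ i, τM (a.2 i) = f ⁻¹' τN (a.2 i)) P →
      OSF.ext S τM P = F.map (TypeCat.ofHom f) ⁻¹' OSF.ext S τN P
  | .bot, _ => rfl
  | .atom a, h => by
      show S.lift a.1 Xm (fun i => τM (a.2 i)) = F.map (TypeCat.ofHom f) ⁻¹' S.lift a.1 Xn (fun i => τN (a.2 i))
      rw [funext h]
      exact S.natural a.1 Xm Xn f _
  | .neg P, h => by
      show (OSF.ext S τM P)ᶜ = F.map (TypeCat.ofHom f) ⁻¹' (OSF.ext S τN P)ᶜ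
      rw [ext_natural f τM τN P h]; rfl
  | .and P Q, h => by
      show OSF.ext S τM P ∩ OSF.ext S τM Q = F.map (TypeCat.ofHom f) ⁻¹' (OSF.ext S τN P ∩ OSF.ext S τN Q)
      rw [ext_natural f τM τN P h.1, ext_natural f τM τN Q h.2]; rfl

/-- disjunction at the one-step level -/
def oor {Z : Type v} (P Q : PropForm Z) : PropForm Z := .neg (.and (.neg P) (.neg Q))

def odisjList {Z : Type v} : List (PropForm Z) → PropForm Z
  | [] => .bot
  | P :: l => oor P (odisjList l)

lemma odisjList_ext {Z : Type _} {X : Type u} (τ : Z → Set X) (t : F.obj X) :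
    ∀ l : List (OSF S Z), (t ∈ OSF.ext S τ (odisjList l) ↔ ∃ P ∈ l, t ∈ OSF.ext S τ P)
  | [] => by simp [odisjList, OSF.ext, PropForm.eval]
  | P :: l => by
      have : t ∈ OSF.ext S τ (oor P (odisjList l))
          ↔ t ∈ OSF.ext S τ P ∨ t ∈ OSF.ext S τ (odisjList l) := by
        show t ∈ ((OSF.ext S τ P)ᶜ ∩ (OSF.ext S τ (odisjList l))ᶜ)ᶜ ↔ _
        simp only [Set.mem_compl_iff, Set.mem_inter_iff]
        tauto
      simp only [odisjList, this, odisjList_ext τ t l, List.mem_cons]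
      constructor
      · rintro (h | ⟨Q, hQ, hx⟩); exact ⟨P, Or.inl rfl, h⟩; exact ⟨Q, Or.inr hQ, hx⟩
      · rintro ⟨Q, (rfl | hQ), hx⟩; exact Or.inl hx; exact Or.inr ⟨Q, hQ, hx⟩

lemma allAtoms_odisjList {Z : Type v} {p : OAtom S Z → Prop} :
    ∀ l : List (OSF S Z), (∀ P ∈ l, AllAtoms p P) → AllAtoms p (odisjList l)
  | [], _ => trivial
  | P :: l, h =>
      show AllAtoms p P ∧ AllAtoms p (odisjList l) from
      ⟨h P (List.mem_cons_self),
        allAtoms_odisjList l fun Q hQ => h Q (List.mem_cons_of_mem _ hQ)⟩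

end UIP
namespace UIP

variable {F : Type u ⥤ Type u} {S : ModalSig F} {V : Type}

/-! ### disjunctive normal forms over a finite list of formulas -/

def litF {A : Type} (f : A → MForm S V) (a : A) (b : Bool) : MForm S V :=
  cond b (f a) (.neg (f a))

noncomputable def tpF {A : Type} [Finite A] (f : A → MForm S V) (s : A → Bool) : MForm S V :=
  letI := Fintype.ofFinite A
  conjList (Finset.univ.toList.map fun a => litF f a (s a))

noncomputable def dnfF {A : Type} [Finite A] (f : A → MForm S V) (Sv : Set (A → Bool)) :
    MForm S V :=
  letI := Fintype.ofFinite A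
  letI := Classical.decEq A
  letI : DecidablePred (· ∈ Sv) := fun _ => Classical.propDecidable _
  disjList ((Finset.univ.filter (· ∈ Sv)).toList.map (tpF f))

lemma litF_sem {A : Type} (f : A → MForm S V) (a : A) (b : Bool) (M : CModel F V) (x : M.X) :
    x ∈ (litF f a b).sem M ↔ (x ∈ (f a).sem M ↔ b = true) := by
  cases b <;> simp [litF, MForm.sem]

lemma mem_tpF {A : Type} [Finite A] (f : A → MForm S V) (s : A → Bool)
    (M : CModel F V) (x : M.X) :
    x ∈ (tpF f s).sem M ↔ ∀ a, (x ∈ (f a).sem M ↔ s a = true) := by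
  letI := Fintype.ofFinite A
  unfold tpF
  rw [conjList_sem]
  constructor
  · intro h a
    have := h (litF f a (s a)) (List.mem_map.2 ⟨a, Finset.mem_toList.2 (Finset.mem_univ a), rfl⟩)
    exact (litF_sem f a (s a) M x).1 this
  · intro h φ hφ
    obtain ⟨a, _, rfl⟩ := List.mem_map.1 hφ
    exact (litF_sem f a (s a) M x).2 (h a)

/-- The canonical Boolean valuation of a point. -/
noncomputable def sv {A : Type} (f : A → MForm S V) (M : CModel F V) (x : M.X) : A → Bool :=
  fun a => pb (x ∈ (f a).sem M)

lemma sv_spec {A : Type} (f : A → MForm S V) (M : CModel F V) (x : M.X) (a : A) :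
    x ∈ (f a).sem M ↔ sv f M x a = true := (pb_iff _).symm

lemma tp_eq_sv {A : Type} (f : A → MForm S V) (M : CModel F V) (x : M.X) (s : A → Bool) :
    (∀ a, (x ∈ (f a).sem M ↔ s a = true)) ↔ s = sv f M x := by
  constructor
  · intro h
    funext a
    exact Bool.eq_iff_iff.2 ((h a).symm.trans (sv_spec f M x a))
  · rintro rfl a; exact sv_spec f M x a

lemma sem_dnfF {A : Type} [Finite A] (f : A → MForm S V) (Sv : Set (A → Bool))
    (M : CModel F V) : (dnfF f Sv).sem M = {x | sv f M x ∈ Sv} := by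
  letI := Fintype.ofFinite A
  letI := Classical.decEq A
  letI : DecidablePred (· ∈ Sv) := fun _ => Classical.propDecidable _
  ext x
  show x ∈ (dnfF f Sv).sem M ↔ _
  unfold dnfF
  rw [disjList_sem]
  simp only [List.mem_map, Finset.mem_toList, Finset.mem_filter, Finset.mem_univ, true_and]
  constructor
  · rintro ⟨φ, ⟨s, hs, rfl⟩, hx⟩
    have := (mem_tpF f s M x).1 hx
    rwa [(tp_eq_sv f M x s).1 this] at hs
  · intro h
    exact ⟨tpF f (sv f M x), ⟨sv f M x, h, rfl⟩,
      (mem_tpF f (sv f M x) M x).2 ((tp_eq_sv f M x (sv f M x)).2 rfl)⟩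

lemma dnf_atom {A : Type} [Finite A] (f : A → MForm S V) (a : A) :
    Eqv (f a) (dnfF f {s | s a = true}) := by
  intro M
  rw [sem_dnfF]
  ext x
  simp only [Set.mem_setOf_eq]
  exact sv_spec f M x a

lemma dnf_bot {A : Type} [Finite A] (f : A → MForm S V) :
    Eqv (MForm.bot : MForm S V) (dnfF f ∅) := by
  intro M; rw [sem_dnfF]; ext x; simp [MForm.sem]

lemma dnf_neg {A : Type} [Finite A] (f : A → MForm S V) (Sv : Set (A → Bool)) :
    Eqv (MForm.neg (dnfF f Sv)) (dnfF f Svᶜ) := by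
  intro M
  show ((dnfF f Sv).sem M)ᶜ = _
  rw [sem_dnfF, sem_dnfF]
  ext x; simp

lemma dnf_and {A : Type} [Finite A] (f : A → MForm S V) (S1 S2 : Set (A → Bool)) :
    Eqv (MForm.and (dnfF f S1) (dnfF f S2)) (dnfF f (S1 ∩ S2)) := by
  intro M
  show (dnfF f S1).sem M ∩ (dnfF f S2).sem M = _
  rw [sem_dnfF, sem_dnfF, sem_dnfF]
  ext x; simp

lemma litF_rk {A : Type} {n : ℕ} (f : A → MForm S V) (a : A) (b : Bool)
    (h : (f a).rk ≤ n) : (litF f a b).rk ≤ n := by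
  cases b <;> simpa [litF, MForm.rk]

lemma tpF_rk {A : Type} [Finite A] {n : ℕ} (f : A → MForm S V) (s : A → Bool)
    (h : ∀ a, (f a).rk ≤ n) : (tpF f s).rk ≤ n := by
  letI := Fintype.ofFinite A
  unfold tpF
  apply conjList_rk
  intro φ hφ
  obtain ⟨a, _, rfl⟩ := List.mem_map.1 hφ
  exact litF_rk f a (s a) (h a)

lemma dnfF_rk {A : Type} [Finite A] {n : ℕ} (f : A → MForm S V) (Sv : Set (A → Bool))
    (h : ∀ a, (f a).rk ≤ n) : (dnfF f Sv).rk ≤ n := by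
  letI := Fintype.ofFinite A
  letI := Classical.decEq A
  letI : DecidablePred (· ∈ Sv) := fun _ => Classical.propDecidable _
  unfold dnfF
  apply disjList_rk
  intro φ hφ
  obtain ⟨s, _, rfl⟩ := List.mem_map.1 hφ
  exact tpF_rk f s h

lemma litF_vars {A : Type} {W : Set V} (f : A → MForm S V) (a : A) (b : Bool)
    (h : (f a).varsIn W) : (litF f a b).varsIn W := by
  cases b <;> simpa [litF, MForm.varsIn]

lemma tpF_vars {A : Type} [Finite A] {W : Set V} (f : A → MForm S V) (s : A → Bool)
    (h : ∀ a, (f a).varsIn W) : (tpF f s).varsIn W := by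
  letI := Fintype.ofFinite A
  unfold tpF
  apply conjList_vars
  intro φ hφ
  obtain ⟨a, _, rfl⟩ := List.mem_map.1 hφ
  exact litF_vars f a (s a) (h a)

lemma dnfF_vars {A : Type} [Finite A] {W : Set V} (f : A → MForm S V) (Sv : Set (A → Bool))
    (h : ∀ a, (f a).varsIn W) : (dnfF f Sv).varsIn W := by
  letI := Fintype.ofFinite A
  letI := Classical.decEq A
  letI : DecidablePred (· ∈ Sv) := fun _ => Classical.propDecidable _
  unfold dnfF
  apply disjList_vars
  intro φ hφ
  obtain ⟨s, _, rfl⟩ := List.mem_map.1 hφ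
  exact tpF_vars f s h

end UIP
namespace UIP

variable {F : Type u ⥤ Type u} {S : ModalSig F} {V : Type}

/-! ### canonical finite sets of formulas of bounded rank -/

def GAt (W : Set V) (P : Set (MForm S V)) : Type :=
  ↥W ⊕ ((m : S.Λ) × (Fin (S.ar m) → ↥P))

lemma gat_finite {W : Set V} {P : Set (MForm S V)} (hW : W.Finite) (hP : P.Finite) :
    Finite (GAt W P) := by
  haveI := hW.to_subtype
  haveI := hP.to_subtype
  haveI := S.finite
  unfold GAt
  infer_instance

def gatF {W : Set V} {P : Set (MForm S V)} : GAt W P → MForm S V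
  | .inl v => .var v.val
  | .inr a => .mod a.1 (fun i => (a.2 i).val)

noncomputable def Gset (W : Set V) (hW : W.Finite) : ℕ → {P : Set (MForm S V) // P.Finite}
  | 0 =>
      haveI := hW.to_subtype
      ⟨Set.range (fun Sv : Set (↥W → Bool) =>
          dnfF (fun v : ↥W => (MForm.var v.val : MForm S V)) Sv),
        Set.finite_range _⟩
  | n + 1 =>
      haveI := gat_finite hW (Gset W hW n).2
      ⟨Set.range (fun Sv : Set (GAt W (Gset W hW n).1 → Bool) => dnfF gatF Sv),
        Set.finite_range _⟩

def GA (W : Set V) (hW : W.Finite) : ℕ → Type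
  | 0 => ↥W
  | n + 1 => GAt W ((Gset (S := S) W hW n).1)

def GF (W : Set V) (hW : W.Finite) : (n : ℕ) → GA (S := S) W hW n → MForm S V
  | 0 => fun v => .var v.val
  | _ + 1 => gatF

lemma GA_finite (W : Set V) (hW : W.Finite) : ∀ n, Finite (GA (S := S) W hW n)
  | 0 => hW.to_subtype
  | n + 1 => gat_finite hW (Gset W hW n).2

lemma Gset_eq (W : Set V) (hW : W.Finite) (n : ℕ) :
    (Gset (S := S) W hW n).1
      = haveI := GA_finite (S := S) W hW n
        Set.range (fun Sv : Set (GA (S := S) W hW n → Bool) => dnfF (GF W hW n) Sv) := by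
  cases n <;> rfl

lemma Gset_mem (W : Set V) (hW : W.Finite) :
    ∀ n, ∀ θ ∈ (Gset (S := S) W hW n).1, θ.varsIn W ∧ θ.rk ≤ n := by
  intro n
  induction n with
  | zero =>
      rintro θ ⟨Sv, rfl⟩
      haveI := hW.to_subtype
      constructor
      · exact dnfF_vars _ Sv fun v => v.2
      · exact dnfF_rk _ Sv fun v => Nat.le_refl 0
  | succ n ih =>
      rintro θ ⟨Sv, rfl⟩
      haveI := gat_finite (S := S) hW (Gset W hW n).2
      constructor
      · refine dnfF_vars _ Sv fun a => ?_
        cases a with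
        | inl v => exact v.2
        | inr a => exact fun i => (ih _ (a.2 i).2).1
      · refine dnfF_rk _ Sv fun a => ?_
        cases a with
        | inl v => exact Nat.zero_le _
        | inr a => exact rk_mod_le_iff.2 fun i => (ih _ (a.2 i).2).2

lemma G_atom_mem (W : Set V) (hW : W.Finite) (n : ℕ) (a : GA (S := S) W hW n) :
    ∃ θ ∈ (Gset (S := S) W hW n).1, Eqv (GF W hW n a) θ := by
  haveI := GA_finite (S := S) W hW n
  refine ⟨dnfF (GF W hW n) {s | s a = true}, ?_, dnf_atom _ a⟩
  rw [Gset_eq]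
  exact ⟨_, rfl⟩

lemma G_bot_mem (W : Set V) (hW : W.Finite) (n : ℕ) :
    ∃ θ ∈ (Gset (S := S) W hW n).1, Eqv (.bot : MForm S V) θ := by
  haveI := GA_finite (S := S) W hW n
  refine ⟨dnfF (GF W hW n) ∅, ?_, dnf_bot _⟩
  rw [Gset_eq]
  exact ⟨_, rfl⟩

lemma G_neg_mem (W : Set V) (hW : W.Finite) (n : ℕ) (θ : MForm S V)
    (hθ : θ ∈ (Gset (S := S) W hW n).1) :
    ∃ θ' ∈ (Gset (S := S) W hW n).1, Eqv (.neg θ) θ' := by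
  haveI := GA_finite (S := S) W hW n
  rw [Gset_eq] at hθ ⊢
  obtain ⟨Sv, rfl⟩ := hθ
  exact ⟨dnfF (GF W hW n) Svᶜ, ⟨_, rfl⟩, dnf_neg _ Sv⟩

lemma G_and_mem (W : Set V) (hW : W.Finite) (n : ℕ) (θ₁ θ₂ : MForm S V)
    (h1 : θ₁ ∈ (Gset (S := S) W hW n).1) (h2 : θ₂ ∈ (Gset (S := S) W hW n).1) :
    ∃ θ' ∈ (Gset (S := S) W hW n).1, Eqv (.and θ₁ θ₂) θ' := by
  haveI := GA_finite (S := S) W hW n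
  rw [Gset_eq] at h1 h2 ⊢
  obtain ⟨S1, rfl⟩ := h1
  obtain ⟨S2, rfl⟩ := h2
  exact ⟨dnfF (GF W hW n) (S1 ∩ S2), ⟨_, rfl⟩, dnf_and _ S1 S2⟩

lemma Gvar (W : Set V) (hW : W.Finite) (v : V) (hv : v ∈ W) :
    ∀ n, ∃ a : GA (S := S) W hW n, GF W hW n a = .var v
  | 0 => ⟨⟨v, hv⟩, rfl⟩
  | _ + 1 => ⟨.inl ⟨v, hv⟩, rfl⟩

lemma Gcomplete (W : Set V) (hW : W.Finite) :
    ∀ (φ : MForm S V) (n : ℕ), φ.varsIn W → φ.rk ≤ n →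
      ∃ θ ∈ (Gset (S := S) W hW n).1, Eqv φ θ
  | .var v, n, hv, _ => by
      obtain ⟨a, ha⟩ := Gvar (S := S) W hW v hv n
      obtain ⟨θ, hθ, he⟩ := G_atom_mem W hW n a
      exact ⟨θ, hθ, (ha ▸ he : Eqv (.var v) θ)⟩
  | .bot, n, _, _ => G_bot_mem W hW n
  | .neg φ, n, hv, hr => by
      obtain ⟨θ, hθ, he⟩ := Gcomplete W hW φ n hv hr
      obtain ⟨θ', hθ', he'⟩ := G_neg_mem W hW n θ hθ
      exact ⟨θ', hθ', (Eqv.neg he).trans he'⟩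
  | .and φ ψ, n, hv, hr => by
      have hr' : φ.rk ≤ n ∧ ψ.rk ≤ n := by
        simpa only [MForm.rk, max_le_iff] using hr
      obtain ⟨θ₁, hθ₁, he₁⟩ := Gcomplete W hW φ n hv.1 hr'.1
      obtain ⟨θ₂, hθ₂, he₂⟩ := Gcomplete W hW ψ n hv.2 hr'.2
      obtain ⟨θ', hθ', he'⟩ := G_and_mem W hW n θ₁ θ₂ hθ₁ hθ₂
      exact ⟨θ', hθ', (Eqv.and he₁ he₂).trans he'⟩
  | .mod m args, n, hv, hr => by
      cases n with
      | zero => exfalso; simp only [MForm.rk] at hr; omega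
      | succ k =>
          have hargs : ∀ i, (args i).rk ≤ k := rk_mod_le_iff.1 hr
          have hex : ∀ i, ∃ θ ∈ (Gset (S := S) W hW k).1, Eqv (args i) θ :=
            fun i => Gcomplete W hW (args i) k (hv i) (hargs i)
          choose θ hmem heqv using hex
          obtain ⟨θ', hθ', he'⟩ :=
            G_atom_mem W hW (k + 1) (.inr ⟨m, fun i => ⟨θ i, hmem i⟩⟩)
          refine ⟨θ', hθ', ?_⟩
          refine (Eqv.mod (args' := fun i => θ i) heqv).trans ?_
          exact he'

end UIP
namespace UIP

variable {F : Type u ⥤ Type u} {V : Type}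

/-! ### the canonical amalgam model -/

/-- The `(V', L)`-theory of a state. -/
def thy (S : ModalSig F) (V' : Set V) (L : ℕ) (M : CModel F V) (x : M.X) :
    Set (MForm S V) :=
  {γ | γ.varsIn V' ∧ γ.rk ≤ L ∧ x ∈ γ.sem M}

/-- Realizable theories. -/
def TIdx (S : ModalSig F) (V' : Set V) (L : ℕ) : Type :=
  {t : Set (MForm S V) // ∃ (M : CModel F V) (x : M.X), thy S V' L M x = t}

noncomputable def witM (S : ModalSig F) (V' : Set V) (L : ℕ) (t : TIdx S V' L) :
    CModel F V := t.2.choose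

noncomputable def witx (S : ModalSig F) (V' : Set V) (L : ℕ) (t : TIdx S V' L) :
    (witM S V' L t).X := t.2.choose_spec.choose

lemma wit_spec (S : ModalSig F) (V' : Set V) (L : ℕ) (t : TIdx S V' L) :
    thy S V' L (witM S V' L t) (witx S V' L t) = t.val := t.2.choose_spec.choose_spec

/-- The amalgam model realizing all realizable `(V', L)`-theories. -/
noncomputable def ZM (S : ModalSig F) (V' : Set V) (L : ℕ) : CModel F V where
  X := Σ t : TIdx S V' L, (witM S V' L t).X
  ξ := fun p => F.map (TypeCat.ofHom fun y => (⟨p.1, y⟩ : Σ t : TIdx S V' L, (witM S V' L t).X))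
    ((witM S V' L p.1).ξ p.2)
  τ := fun v => {p | p.2 ∈ (witM S V' L p.1).τ v}

lemma ZM_pullback (S : ModalSig F) (V' : Set V) (L : ℕ) (t : TIdx S V' L)
    (γ : MForm S V) :
    γ.sem (witM S V' L t)
      = (fun y => (⟨t, y⟩ : (ZM S V' L).X)) ⁻¹' γ.sem (ZM S V' L) := by
  apply sem_pullback
  · intro v; rfl
  · intro x; rfl

/-- The canonical map of any model into the amalgam. -/
noncomputable def gmap (S : ModalSig F) (V' : Set V) (L : ℕ) (M : CModel F V)
    (x : M.X) : (ZM S V' L).X :=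
  ⟨⟨thy S V' L M x, M, x, rfl⟩, witx S V' L ⟨thy S V' L M x, M, x, rfl⟩⟩

lemma gmap_transfer (S : ModalSig F) (V' : Set V) (L : ℕ) (M : CModel F V) (x : M.X)
    (γ : MForm S V) (hvars : γ.varsIn V') (hrk : γ.rk ≤ L) :
    x ∈ γ.sem M ↔ gmap S V' L M x ∈ γ.sem (ZM S V' L) := by
  set t : TIdx S V' L := ⟨thy S V' L M x, M, x, rfl⟩ with ht
  have h1 : gmap S V' L M x ∈ γ.sem (ZM S V' L)
      ↔ witx S V' L t ∈ γ.sem (witM S V' L t) := by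
    rw [ZM_pullback S V' L t γ]; exact Iff.rfl
  rw [h1]
  have h2 : witx S V' L t ∈ γ.sem (witM S V' L t) ↔ γ ∈ t.val := by
    rw [← wit_spec S V' L t]
    exact ⟨fun h => ⟨hvars, hrk, h⟩, fun h => h.2.2⟩
  rw [h2]
  exact ⟨fun h => ⟨hvars, hrk, h⟩, fun h => h.2.2⟩

lemma gmap_semEq (S : ModalSig F) (V' : Set V) (L : ℕ) (M : CModel F V)
    (γ : MForm S V) (hvars : γ.varsIn V') (hrk : γ.rk ≤ L) :
    γ.sem M = gmap S V' L M ⁻¹' γ.sem (ZM S V' L) := by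
  ext x; exact gmap_transfer S V' L M x γ hvars hrk

lemma Zreflect (S : ModalSig F) (V' : Set V) (L : ℕ) (α β : MForm S V)
    (hα : α.varsIn V') (hrα : α.rk ≤ L) (hβ : β.varsIn V') (hrβ : β.rk ≤ L)
    (h : α.sem (ZM S V' L) ⊆ β.sem (ZM S V' L)) : Imp α β := by
  intro M x hx
  exact (gmap_transfer S V' L M x β hβ hrβ).2
    (h ((gmap_transfer S V' L M x α hα hrα).1 hx))

/-! ### the `Option` extension model -/

noncomputable def OptM (Z : CModel F V) (t : F.obj Z.X) (g : V → Bool) : CModel F V where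
  X := Option Z.X
  ξ := fun o => Option.rec (F.map (TypeCat.ofHom (some : Z.X → Option Z.X)) t)
    (fun z => F.map (TypeCat.ofHom (some : Z.X → Option Z.X)) (Z.ξ z)) o
  τ := fun v => (some '' Z.τ v) ∪ {o | o = none ∧ g v = true}

lemma OptM_pullback {S : ModalSig F} (Z : CModel F V) (t : F.obj Z.X) (g : V → Bool)
    (γ : MForm S V) : γ.sem Z = (some : Z.X → Option Z.X) ⁻¹' γ.sem (OptM Z t g) := by
  refine sem_pullback _ ?_ (fun _ => rfl) γ
  intro v
  ext z
  simp [OptM, Set.mem_preimage]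

lemma OptM_none_val (Z : CModel F V) (t : F.obj Z.X) (g : V → Bool) (v : V) :
    (none ∈ (OptM Z t g).τ v) ↔ g v = true := by
  simp [OptM]
  exact ⟨fun h => h.elim (fun ⟨_, _, hz⟩ => absurd hz (Option.some_ne_none _)) (fun h => h.2), fun h => Or.inr ⟨rfl, h⟩⟩

lemma OptM_none_ξ (Z : CModel F V) (t : F.obj Z.X) (g : V → Bool) :
    (OptM Z t g).ξ none = F.map (TypeCat.ofHom (some : Z.X → Option Z.X)) t := rfl

end UIP
namespace UIP

variable {F : Type u ⥤ Type u} {S : ModalSig F} {V : Type}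

lemma allAtoms_mono {Z : Type v} {p q : OAtom S Z → Prop} (h : ∀ a, p a → q a) :
    ∀ P : OSF S Z, AllAtoms p P → AllAtoms q P
  | .bot, _ => trivial
  | .atom a, hp => h a hp
  | .neg P, hp => allAtoms_mono h P hp
  | .and P Q, hp => ⟨allAtoms_mono h P hp.1, allAtoms_mono h Q hp.2⟩

lemma interp_zero (V₁ V₂ : Set V) (hf1 : V₁.Finite) (hf2 : V₂.Finite)
    (φ ψ : MForm S V) (hv1 : φ.varsIn V₁) (hv2 : ψ.varsIn V₂)
    (h0 : φ.rk = 0 ∨ ψ.rk = 0) (himp : Imp φ ψ) :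
    ∃ θ : MForm S V, θ.varsIn (V₁ ∩ V₂) ∧ θ.rk ≤ 0 ∧ Imp φ θ ∧ Imp θ ψ := by
  classical
  have hfI : (V₁ ∩ V₂).Finite := hf1.inter_of_left V₂
  haveI := hfI.to_subtype
  set fA : ↥(V₁ ∩ V₂) → MForm S V := fun p => .var p.val with hfA
  set Sv : Set (↥(V₁ ∩ V₂) → Bool) :=
    {s | ∃ (M : CModel F V) (y : M.X), y ∈ φ.sem M ∧ sv fA M y = s} with hSv
  refine ⟨dnfF fA Sv, dnfF_vars fA Sv fun p => p.2, dnfF_rk fA Sv fun p => Nat.le_refl 0,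
    ?_, ?_⟩
  · intro M x hx
    rw [sem_dnfF]
    exact ⟨M, x, hx, rfl⟩
  · intro M x hx
    rw [sem_dnfF] at hx
    obtain ⟨M', y, hyφ, hys⟩ := hx
    have habv : ∀ (p : V) (hp : p ∈ V₁ ∩ V₂), (y ∈ M'.τ p ↔ x ∈ M.τ p) := by
      intro p hp
      have h1 := sv_spec fA M' y ⟨p, hp⟩
      have h2 := sv_spec fA M x ⟨p, hp⟩
      rw [hys] at h1
      exact h1.trans h2.symm
    rcases h0 with hφ0 | hψ0
    · -- surgery on M
      set τ'' : V → Set M.X :=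
        fun p => if p ∈ V₁ ∧ p ∉ V₂ then {_z : M.X | y ∈ M'.τ p} else M.τ p with hτ''
      set M'' : CModel F V := ⟨M.X, M.ξ, τ''⟩ with hM''
      have hsemψ : ψ.sem M'' = ψ.sem M := by
        have := sem_congr (S := S) M.ξ τ'' M.τ
          (fun v hv => if_neg (fun hc => hc.2 hv)) ψ hv2
        exact this
      have hpy : pholds (fun v => y ∈ M'.τ v) φ := (rk_zero_sem M' y φ hφ0).1 hyφ
      have hpx : pholds (fun v => x ∈ M''.τ v) φ := by
        refine (pholds_congr (W := V₁) _ _ ?_ φ hv1).1 hpy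
        intro v hv
        by_cases hv2' : v ∈ V₂
        · show y ∈ M'.τ v ↔ x ∈ τ'' v
          have he : τ'' v = M.τ v := if_neg (fun hc : v ∈ V₁ ∧ v ∉ V₂ => hc.2 hv2')
          rw [he]
          exact habv v ⟨hv, hv2'⟩
        · show y ∈ M'.τ v ↔ x ∈ τ'' v
          have he : τ'' v = {_z : M.X | y ∈ M'.τ v} := if_pos ⟨hv, hv2'⟩
          rw [he]
          exact Iff.rfl
      have hφ'' : x ∈ φ.sem M'' := (rk_zero_sem M'' x φ hφ0).2 hpx
      have := himp M'' hφ''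
      rwa [hsemψ] at this
    · -- surgery on M'
      set τ'' : V → Set M'.X :=
        fun p => if p ∈ V₂ ∧ p ∉ V₁ then {_z : M'.X | x ∈ M.τ p} else M'.τ p with hτ''
      set M'' : CModel F V := ⟨M'.X, M'.ξ, τ''⟩ with hM''
      have hsemφ : φ.sem M'' = φ.sem M' := by
        exact sem_congr (S := S) M'.ξ τ'' M'.τ
          (fun v hv => if_neg (fun hc => hc.2 hv)) φ hv1
      have hyφ'' : y ∈ ψ.sem M'' := himp M'' (by rw [hsemφ]; exact hyφ)
      have hpy : pholds (fun v => y ∈ M''.τ v) ψ := (rk_zero_sem M'' y ψ hψ0).1 hyφ''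
      have hpx : pholds (fun v => x ∈ M.τ v) ψ := by
        refine (pholds_congr (W := V₂) _ _ ?_ ψ hv2).1 hpy
        intro v hv
        by_cases hv1' : v ∈ V₁
        · show y ∈ τ'' v ↔ x ∈ M.τ v
          have he : τ'' v = M'.τ v := if_neg (fun hc : v ∈ V₂ ∧ v ∉ V₁ => hc.2 hv1')
          rw [he]
          exact habv v ⟨hv1', hv⟩
        · show y ∈ τ'' v ↔ x ∈ M.τ v
          have he : τ'' v = {_z : M'.X | x ∈ M.τ v} := if_pos ⟨hv, hv1'⟩
          rw [he]
          exact Iff.rfl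
      exact (rk_zero_sem M x ψ hψ0).2 hpx

end UIP
namespace UIP

variable {F : Type u ⥤ Type u} {S : ModalSig F} {V : Type}

lemma mor_sem_set (M : CModel F V) (φ ψ : MForm S V) :
    (mor φ ψ).sem M = φ.sem M ∪ ψ.sem M := by
  ext x; rw [mor_sem]; exact (Set.mem_union x _ _).symm

lemma mor_vars {W : Set V} (φ ψ : MForm S V) (h1 : φ.varsIn W) (h2 : ψ.varsIn W) :
    (mor φ ψ).varsIn W := ⟨h1, h2⟩

theorem interp (hos : OneStepInterpolation S) :
    ∀ (m : ℕ) (V₁ V₂ : Set V), V₁.Finite → V₂.Finite →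
      ∀ φ ψ : MForm S V, φ.varsIn V₁ → ψ.varsIn V₂ → min φ.rk ψ.rk ≤ m → Imp φ ψ →
      ∃ θ : MForm S V, θ.varsIn (V₁ ∩ V₂) ∧ θ.rk ≤ min φ.rk ψ.rk ∧ Imp φ θ ∧ Imp θ ψ := by
  intro m
  induction m with
  | zero =>
      intro V₁ V₂ hf1 hf2 φ ψ hv1 hv2 hm himp
      have h0 : φ.rk = 0 ∨ ψ.rk = 0 := by
        have h1 := Nat.le_zero.1 hm
        rcases le_total φ.rk ψ.rk with h | h
        · left; rw [min_eq_left h] at h1; exact h1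
        · right; rw [min_eq_right h] at h1; exact h1
      obtain ⟨θ, ht1, ht2, ht3, ht4⟩ := interp_zero V₁ V₂ hf1 hf2 φ ψ hv1 hv2 h0 himp
      exact ⟨θ, ht1, le_trans ht2 (Nat.zero_le _), ht3, ht4⟩
  | succ m IH =>
      intro V₁ V₂ hf1 hf2 φ ψ hv1 hv2 hm himp
      by_cases hm' : min φ.rk ψ.rk ≤ m
      · exact IH V₁ V₂ hf1 hf2 φ ψ hv1 hv2 hm' himp
      classical
      have hmin : min φ.rk ψ.rk = m + 1 := le_antisymm hm (by omega)
      obtain ⟨a1, ha⟩ : ∃ a1, φ.rk = a1 + 1 := by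
        have := min_le_left φ.rk ψ.rk
        exact ⟨φ.rk - 1, by omega⟩
      obtain ⟨b1, hb⟩ : ∃ b1, ψ.rk = b1 + 1 := by
        have := min_le_right φ.rk ψ.rk
        exact ⟨ψ.rk - 1, by omega⟩
      have hab : min a1 b1 = m := by
        rw [ha, hb] at hmin
        omega
      have hma : m ≤ a1 := by omega
      have hmb : m ≤ b1 := by omega
      -- setup
      set V' : Set V := V₁ ∪ V₂ with hV'
      have hfV' : V'.Finite := hf1.union hf2
      set L : ℕ := max a1 b1 with hL
      have hL1 : a1 ≤ L := le_max_left _ _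
      have hL2 : b1 ≤ L := le_max_right _ _
      have hmL : m ≤ L := le_trans hma hL1
      have hVs1 : V₁ ⊆ V' := Set.subset_union_left
      have hVs2 : V₂ ⊆ V' := Set.subset_union_right
      have hVsI1 : V₁ ∩ V₂ ⊆ V' := fun p hp => hVs1 hp.1
      set Z : CModel F V := ZM S V' L with hZdef
      set A1 : Set (Set Z.X) :=
        {C | ∃ α : MForm S V, α.varsIn V₁ ∧ α.rk ≤ a1 ∧ α.sem Z = C} with hA1
      set A2 : Set (Set Z.X) :=
        {C | ∃ β : MForm S V, β.varsIn V₂ ∧ β.rk ≤ b1 ∧ β.sem Z = C} with hA2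
      have sub1 : IsBoolSubalg A1 := by
        refine ⟨⟨.bot, trivial, Nat.zero_le _, rfl⟩,
          ⟨.neg .bot, trivial, Nat.zero_le _, Set.compl_empty⟩, ?_, ?_, ?_⟩
        · rintro A ⟨α, h1, h2, rfl⟩
          exact ⟨.neg α, h1, h2, rfl⟩
        · rintro A ⟨α, h1, h2, rfl⟩ B ⟨β, h1', h2', rfl⟩
          refine ⟨mor α β, mor_vars α β h1 h1', ?_, mor_sem_set Z α β⟩
          rw [rk_mor]
          exact max_le h2 h2'
        · rintro A ⟨α, h1, h2, rfl⟩ B ⟨β, h1', h2', rfl⟩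
          exact ⟨.and α β, ⟨h1, h1'⟩, max_le h2 h2', rfl⟩
      have sub2 : IsBoolSubalg A2 := by
        refine ⟨⟨.bot, trivial, Nat.zero_le _, rfl⟩,
          ⟨.neg .bot, trivial, Nat.zero_le _, Set.compl_empty⟩, ?_, ?_, ?_⟩
        · rintro A ⟨α, h1, h2, rfl⟩
          exact ⟨.neg α, h1, h2, rfl⟩
        · rintro A ⟨α, h1, h2, rfl⟩ B ⟨β, h1', h2', rfl⟩
          refine ⟨mor α β, mor_vars α β h1 h1', ?_, mor_sem_set Z α β⟩
          rw [rk_mor]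
          exact max_le h2 h2'
        · rintro A ⟨α, h1, h2, rfl⟩ B ⟨β, h1', h2', rfl⟩
          exact ⟨.and α β, ⟨h1, h1'⟩, max_le h2 h2', rfl⟩
      have fin1 : A1.Finite := by
        apply Set.Finite.subset
          (Set.Finite.image (fun θ : MForm S V => θ.sem Z) (Gset V₁ hf1 a1).2)
        rintro C ⟨α, h1, h2, rfl⟩
        obtain ⟨θ, hθ, he⟩ := Gcomplete V₁ hf1 α a1 h1 h2
        exact ⟨θ, hθ, (he Z).symm⟩
      have fin2 : A2.Finite := by
        apply Set.Finite.subset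
          (Set.Finite.image (fun θ : MForm S V => θ.sem Z) (Gset V₂ hf2 b1).2)
        rintro C ⟨β, h1, h2, rfl⟩
        obtain ⟨θ, hθ, he⟩ := Gcomplete V₂ hf2 β b1 h1 h2
        exact ⟨θ, hθ, (he Z).symm⟩
      -- IH-powered interpolation at Z
      have key : ∀ α β : MForm S V, α.varsIn V₁ → α.rk ≤ a1 → β.varsIn V₂ → β.rk ≤ b1 →
          α.sem Z ⊆ β.sem Z →
          ∃ γ : MForm S V, γ.varsIn (V₁ ∩ V₂) ∧ γ.rk ≤ m ∧ Imp α γ ∧ Imp γ β := by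
        intro α β ha1' ha2' hb1' hb2' hsub
        have himpαβ : Imp α β := Zreflect S V' L α β (varsIn_mono hVs1 α ha1')
          (ha2'.trans hL1) (varsIn_mono hVs2 β hb1') (hb2'.trans hL2) hsub
        have hmm : min α.rk β.rk ≤ m :=
          le_trans (min_le_min ha2' hb2') (le_of_eq hab)
        obtain ⟨γ, hg1, hg2, hg3, hg4⟩ := IH V₁ V₂ hf1 hf2 α β ha1' hb1' hmm himpαβ
        exact ⟨γ, hg1, le_trans hg2 hmm, hg3, hg4⟩
      have hinterp : Interpolable A1 A2 := by
        rintro A ⟨α, ha1', ha2', rfl⟩ B ⟨β, hb1', hb2', rfl⟩ hAB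
        obtain ⟨γ, hg1, hg2, hg3, hg4⟩ := key α β ha1' ha2' hb1' hb2' hAB
        exact ⟨γ.sem Z,
          ⟨⟨γ, varsIn_mono Set.inter_subset_left γ hg1, hg2.trans hma, rfl⟩,
            ⟨γ, varsIn_mono Set.inter_subset_right γ hg1, hg2.trans hmb, rfl⟩⟩,
          hg3 Z, hg4 Z⟩
      have hc : ∀ C : ↥(A1 ∩ A2),
          ∃ γ : MForm S V, γ.varsIn (V₁ ∩ V₂) ∧ γ.rk ≤ m ∧ γ.sem Z = C.val := by
        rintro ⟨C, hC1, hC2⟩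
        obtain ⟨α, ha1', ha2', hae⟩ := hC1
        obtain ⟨β, hb1', hb2', hbe⟩ := hC2
        obtain ⟨γ, hg1, hg2, hg3, hg4⟩ := key α β ha1' ha2' hb1' hb2'
          (by rw [hae, hbe])
        have h4 := hg4 Z
        rw [hbe] at h4
        have h3 := hg3 Z
        rw [hae] at h3
        exact ⟨γ, hg1, hg2, le_antisymm h4 h3⟩
      choose c hcv hcr hcs using hc
      -- embeddings into the subalgebras
      set e1 : MForm S V → ↥A1 :=
        fun γ => if h : γ.sem Z ∈ A1 then ⟨γ.sem Z, h⟩ else ⟨∅, sub1.1⟩ with he1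
      set e2 : MForm S V → ↥A2 :=
        fun γ => if h : γ.sem Z ∈ A2 then ⟨γ.sem Z, h⟩ else ⟨∅, sub2.1⟩ with he2
      haveI : Fintype ↥V₁ := hf1.fintype
      haveI : Fintype ↥V₂ := hf2.fintype
      set uext : (↥V₁ → Bool) → V → Bool :=
        fun u p => if h : p ∈ V₁ then u ⟨p, h⟩ else false with huext
      set vext : (↥V₂ → Bool) → V → Bool :=
        fun v p => if h : p ∈ V₂ then v ⟨p, h⟩ else false with hvext
      set hatφ : (↥V₁ → Bool) → OSF S (MForm S V) :=
        fun u => m2osf (topSubst (uext u) φ) with hhatφ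
      set hatψ : (↥V₂ → Bool) → OSF S (MForm S V) :=
        fun v => m2osf (topSubst (vext v) ψ) with hhatψ
      set compat : (↥V₁ → Bool) → (↥V₂ → Bool) → Prop :=
        fun u v => ∀ (p : V) (h1 : p ∈ V₁) (h2 : p ∈ V₂), u ⟨p, h1⟩ = v ⟨p, h2⟩ with hcompatd
      set Φ : (↥V₂ → Bool) → OSF S (MForm S V) :=
        fun v => odisjList
          (((Finset.univ : Finset (↥V₁ → Bool)).filter (fun u => compat u v)).toList.map hatφ)
        with hΦ
      have hatoms_φ : ∀ u, AllAtoms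
          (fun a : OAtom S (MForm S V) => ∀ i, (a.2 i).varsIn V₁ ∧ (a.2 i).rk ≤ a1)
          (hatφ u) :=
        fun u => allAtoms_m2osf_topSubst (uext u) φ hv1 (le_of_eq ha)
      have hatoms_ψ : ∀ v, AllAtoms
          (fun a : OAtom S (MForm S V) => ∀ i, (a.2 i).varsIn V₂ ∧ (a.2 i).rk ≤ b1)
          (hatψ v) :=
        fun v => allAtoms_m2osf_topSubst (vext v) ψ hv2 (le_of_eq hb)
      have hatoms_Φ : ∀ v, AllAtoms
          (fun a : OAtom S (MForm S V) => ∀ i, (a.2 i).varsIn V₁ ∧ (a.2 i).rk ≤ a1)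
          (Φ v) := by
        intro v
        apply allAtoms_odisjList
        intro P hP
        obtain ⟨u, _, rfl⟩ := List.mem_map.1 hP
        exact hatoms_φ u
      have hextΦ : ∀ v, OSF.ext S (Subtype.val : ↥A1 → Set Z.X) (OSF.map S e1 (Φ v))
          = OSF.ext S (fun γ : MForm S V => γ.sem Z) (Φ v) := by
        intro v
        rw [ext_map]
        apply ext_congr
        refine allAtoms_mono ?_ _ (hatoms_Φ v)
        intro a hai i
        have hmem : (a.2 i).sem Z ∈ A1 := ⟨a.2 i, (hai i).1, (hai i).2, rfl⟩
        show (e1 (a.2 i)).val = (a.2 i).sem Z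
        rw [he1]
        simp only [dif_pos hmem]
      have hextψ : ∀ v, OSF.ext S (Subtype.val : ↥A2 → Set Z.X) (OSF.map S e2 (hatψ v))
          = OSF.ext S (fun γ : MForm S V => γ.sem Z) (hatψ v) := by
        intro v
        rw [ext_map]
        apply ext_congr
        refine allAtoms_mono ?_ _ (hatoms_ψ v)
        intro a hai i
        have hmem : (a.2 i).sem Z ∈ A2 := ⟨a.2 i, (hai i).1, (hai i).2, rfl⟩
        show (e2 (a.2 i)).val = (a.2 i).sem Z
        rw [he2]
        simp only [dif_pos hmem]
      -- the one-step entailment hypothesis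
      have oshyp : ∀ v : ↥V₂ → Bool,
          OSF.ext S (fun γ : MForm S V => γ.sem Z) (Φ v)
            ⊆ OSF.ext S (fun γ : MForm S V => γ.sem Z) (hatψ v) := by
        intro v t ht
        obtain ⟨P, hP, htP⟩ := (odisjList_ext _ t _).1 ht
        obtain ⟨u, hu, rfl⟩ := List.mem_map.1 hP
        have hcompat : compat u v := (Finset.mem_filter.1 (Finset.mem_toList.1 hu)).2
        set gB : V → Bool :=
          fun p => if h : p ∈ V₁ then u ⟨p, h⟩ else
            if h : p ∈ V₂ then v ⟨p, h⟩ else false with hgB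
        set N : CModel F V := OptM Z t gB with hN
        have hpull : ∀ γ : MForm S V,
            γ.sem Z = (some : Z.X → Option Z.X) ⁻¹' γ.sem N :=
          fun γ => OptM_pullback Z t gB γ
        have hnat : ∀ P : OSF S (MForm S V),
            OSF.ext S (fun γ : MForm S V => γ.sem Z) P
              = F.map (TypeCat.ofHom (some : Z.X → Option Z.X)) ⁻¹'
                  OSF.ext S (fun γ : MForm S V => γ.sem N) P := by
          intro P
          exact ext_natural _ _ _ P
            (allAtoms_of_forall (fun a => fun i => hpull _) P)
        have h1 : F.map (TypeCat.ofHom (some : Z.X → Option Z.X)) t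
            ∈ OSF.ext S (fun γ : MForm S V => γ.sem N) (hatφ u) := by
          rw [hnat] at htP
          exact htP
        have h2 : (none : Option Z.X) ∈ (topSubst (uext u) φ).sem N :=
          (m2osf_sem N none _ (noTopVar_topSubst _ φ)).2 h1
        have h3 : (none : Option Z.X) ∈ φ.sem N := by
          refine (topSubst_sem N none (uext u) φ hv1 ?_).2 h2
          intro p hp
          refine (OptM_none_val Z t gB p).trans ?_
          have hgu : gB p = uext u p := by
            rw [hgB, huext]
            simp only [dif_pos hp]
          rw [hgu]
        have h4 : (none : Option Z.X) ∈ ψ.sem N := himp N h3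
        have h5 : (none : Option Z.X) ∈ (topSubst (vext v) ψ).sem N := by
          refine (topSubst_sem N none (vext v) ψ hv2 ?_).1 h4
          intro p hp
          refine (OptM_none_val Z t gB p).trans ?_
          have hgv : gB p = vext v p := by
            by_cases hp1 : p ∈ V₁
            · rw [hgB, hvext]
              simp only [dif_pos hp1, dif_pos hp]
              exact hcompat p hp1 hp
            · rw [hgB, hvext]
              simp only [dif_neg hp1, dif_pos hp]
          rw [hgv]
        have h6 : F.map (TypeCat.ofHom (some : Z.X → Option Z.X)) t
            ∈ OSF.ext S (fun γ : MForm S V => γ.sem N) (hatψ v) :=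
          (m2osf_sem N none _ (noTopVar_topSubst _ ψ)).1 h5
        rw [hnat]
        exact h6
      -- apply one-step interpolation
      have hos' : ∀ v : ↥V₂ → Bool, ∃ ρ : OSF S ↥(A1 ∩ A2),
          OSF.ext S (Subtype.val : ↥A1 → Set Z.X) (OSF.map S e1 (Φ v))
            ⊆ OSF.ext S (Subtype.val : ↥(A1 ∩ A2) → Set Z.X) ρ ∧
          OSF.ext S (Subtype.val : ↥(A1 ∩ A2) → Set Z.X) ρ
            ⊆ OSF.ext S (Subtype.val : ↥A2 → Set Z.X) (OSF.map S e2 (hatψ v)) := by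
        intro v
        exact hos Z.X A1 A2 sub1 sub2 fin1 fin2 hinterp
          (OSF.map S e1 (Φ v)) (OSF.map S e2 (hatψ v))
          (by rw [hextΦ v, hextψ v]; exact oshyp v)
      choose ρ hρ1 hρ2 using hos'
      set r : (↥V₂ → Bool) → MForm S V :=
        fun v => osf2m (OSF.map S c (ρ v)) with hrdef
      have hr_vars : ∀ v, (r v).varsIn (V₁ ∩ V₂) := by
        intro v
        apply osf2m_vars
        apply allAtoms_map
        exact allAtoms_of_forall (fun a => fun i => hcv _) _
      have hr_rk : ∀ v, (r v).rk ≤ m + 1 := by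
        intro v
        apply osf2m_rk
        apply allAtoms_map
        exact allAtoms_of_forall (fun a => fun i => hcr _) _
      have hext_ρ : ∀ v, OSF.ext S (Subtype.val : ↥(A1 ∩ A2) → Set Z.X) (ρ v)
          = OSF.ext S (fun C : ↥(A1 ∩ A2) => (c C).sem Z) (ρ v) := by
        intro v
        exact ext_congr _ (allAtoms_of_forall (fun a => fun i => (hcs _).symm) _)
      have hr_sem : ∀ (M : CModel F V) (x : M.X) (v : ↥V₂ → Bool),
          x ∈ (r v).sem M ↔ F.map (TypeCat.ofHom (gmap S V' L M)) (M.ξ x)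
            ∈ OSF.ext S (Subtype.val : ↥(A1 ∩ A2) → Set Z.X) (ρ v) := by
        intro M x v
        rw [hrdef]
        rw [osf2m_sem, ext_map]
        have hnat2 : OSF.ext S (fun C : ↥(A1 ∩ A2) => (c C).sem M) (ρ v)
            = F.map (TypeCat.ofHom (gmap S V' L M)) ⁻¹'
                OSF.ext S (fun C : ↥(A1 ∩ A2) => (c C).sem Z) (ρ v) := by
          apply ext_natural
          apply allAtoms_of_forall
          intro a i
          exact gmap_semEq S V' L M (c (a.2 i))
            (varsIn_mono hVsI1 _ (hcv _)) ((hcr _).trans hmL)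
        rw [hnat2, hext_ρ v]
        exact Iff.rfl
      -- pushing φ forward
      have hφ_push : ∀ (M : CModel F V) (x : M.X) (u : ↥V₁ → Bool),
          (∀ p : ↥V₁, (x ∈ M.τ p.val ↔ u p = true)) → x ∈ φ.sem M →
          F.map (TypeCat.ofHom (gmap S V' L M)) (M.ξ x)
            ∈ OSF.ext S (fun γ : MForm S V => γ.sem Z) (hatφ u) := by
        intro M x uu huu hx
        have h1 : x ∈ (topSubst (uext uu) φ).sem M := by
          refine (topSubst_sem M x (uext uu) φ hv1 ?_).1 hx
          intro p hp
          have : uext uu p = uu ⟨p, hp⟩ := by rw [huext]; simp only [dif_pos hp]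
          rw [this]
          exact huu ⟨p, hp⟩
        have h2 : M.ξ x ∈ OSF.ext S (fun γ : MForm S V => γ.sem M) (hatφ uu) :=
          (m2osf_sem M x _ (noTopVar_topSubst _ φ)).1 h1
        have hnat : OSF.ext S (fun γ : MForm S V => γ.sem M) (hatφ uu)
            = F.map (TypeCat.ofHom (gmap S V' L M)) ⁻¹'
                OSF.ext S (fun γ : MForm S V => γ.sem Z) (hatφ uu) := by
          apply ext_natural
          refine allAtoms_mono ?_ _ (hatoms_φ uu)
          intro a hai i
          exact gmap_semEq S V' L M (a.2 i)
            (varsIn_mono hVs1 _ (hai i).1) (((hai i).2).trans hL1)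
        rw [hnat] at h2
        exact h2
      -- pulling ψ back
      have hψ_pull : ∀ (M : CModel F V) (x : M.X) (v : ↥V₂ → Bool),
          (∀ p : ↥V₂, (x ∈ M.τ p.val ↔ v p = true)) →
          F.map (TypeCat.ofHom (gmap S V' L M)) (M.ξ x)
            ∈ OSF.ext S (fun γ : MForm S V => γ.sem Z) (hatψ v) → x ∈ ψ.sem M := by
        intro M x vv hvv hmem
        have hnat : OSF.ext S (fun γ : MForm S V => γ.sem M) (hatψ vv)
            = F.map (TypeCat.ofHom (gmap S V' L M)) ⁻¹'
                OSF.ext S (fun γ : MForm S V => γ.sem Z) (hatψ vv) := by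
          apply ext_natural
          refine allAtoms_mono ?_ _ (hatoms_ψ vv)
          intro a hai i
          exact gmap_semEq S V' L M (a.2 i)
            (varsIn_mono hVs2 _ (hai i).1) (((hai i).2).trans hL2)
        have h2 : M.ξ x ∈ OSF.ext S (fun γ : MForm S V => γ.sem M) (hatψ vv) := by
          rw [hnat]
          exact hmem
        have h1 : x ∈ (topSubst (vext vv) ψ).sem M :=
          (m2osf_sem M x _ (noTopVar_topSubst _ ψ)).2 h2
        refine (topSubst_sem M x (vext vv) ψ hv2 ?_).2 h1
        intro p hp
        have : vext vv p = vv ⟨p, hp⟩ := by rw [hvext]; simp only [dif_pos hp]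
        rw [this]
        exact hvv ⟨p, hp⟩
      -- assemble the interpolant
      have hfI : (V₁ ∩ V₂).Finite := hf1.inter_of_left V₂
      haveI : Fintype ↥(V₁ ∩ V₂) := hfI.fintype
      set vcompat : (↥V₂ → Bool) → (↥(V₁ ∩ V₂) → Bool) → Prop :=
        fun v w => ∀ (p : V) (h2 : p ∈ V₂) (hw : p ∈ V₁ ∩ V₂), v ⟨p, h2⟩ = w ⟨p, hw⟩
        with hvcd
      set χ : (↥(V₁ ∩ V₂) → Bool) → MForm S V :=
        fun w => tpF (fun p : ↥(V₁ ∩ V₂) => (.var p.val : MForm S V)) w with hχ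
      set conjw : (↥(V₁ ∩ V₂) → Bool) → MForm S V :=
        fun w => conjList
          (((Finset.univ : Finset (↥V₂ → Bool)).filter (fun v => vcompat v w)).toList.map r)
        with hconjw
      refine ⟨disjList ((Finset.univ : Finset (↥(V₁ ∩ V₂) → Bool)).toList.map
        (fun w => .and (χ w) (conjw w))), ?_, ?_, ?_, ?_⟩
      · -- vars
        apply disjList_vars
        intro θ' hθ'
        obtain ⟨w, _, rfl⟩ := List.mem_map.1 hθ'
        refine ⟨?_, ?_⟩
        · rw [hχ]; exact tpF_vars _ w fun p => p.2
        · rw [hconjw]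
          apply conjList_vars
          intro θ'' hθ''
          obtain ⟨v, _, rfl⟩ := List.mem_map.1 hθ''
          exact hr_vars v
      · -- rank
        rw [hmin]
        apply disjList_rk
        intro θ' hθ'
        obtain ⟨w, _, rfl⟩ := List.mem_map.1 hθ'
        show max (χ w).rk (conjw w).rk ≤ m + 1
        apply max_le
        · rw [hχ]
          exact le_trans (tpF_rk _ w fun p => Nat.le_refl 0) (Nat.zero_le _)
        · rw [hconjw]
          apply conjList_rk
          intro θ'' hθ''
          obtain ⟨v, _, rfl⟩ := List.mem_map.1 hθ''
          exact hr_rk v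
      · -- Imp φ θ
        intro M x hx
        rw [disjList_sem]
        set uu : ↥V₁ → Bool := fun p => pb (x ∈ M.τ p.val) with huu
        have huu_spec : ∀ p : ↥V₁, (x ∈ M.τ p.val ↔ uu p = true) := by
          intro p; rw [huu]; exact (pb_iff _).symm
        set w : ↥(V₁ ∩ V₂) → Bool := fun p => uu ⟨p.val, p.2.1⟩ with hw
        refine ⟨.and (χ w) (conjw w),
          List.mem_map.2 ⟨w, Finset.mem_toList.2 (Finset.mem_univ w), rfl⟩, ?_, ?_⟩
        · -- χ w
          rw [hχ]
          refine (mem_tpF _ w M x).2 ?_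
          intro p
          show x ∈ M.τ p.val ↔ w p = true
          rw [hw]
          exact huu_spec ⟨p.val, p.2.1⟩
        · -- conjw w
          rw [hconjw]
          rw [conjList_sem]
          intro θ'' hθ''
          obtain ⟨v, hvmem, rfl⟩ := List.mem_map.1 hθ''
          have hvc : vcompat v w := (Finset.mem_filter.1 (Finset.mem_toList.1 hvmem)).2
          have hcuv : compat uu v := by
            rw [hcompatd]
            intro p h1 h2
            have := hvc p h2 ⟨h1, h2⟩
            rw [this, hw]
          rw [hr_sem]
          apply hρ1 v
          rw [hextΦ v]
          refine (odisjList_ext _ _ _).2 ⟨hatφ uu, ?_, hφ_push M x uu huu_spec hx⟩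
          exact List.mem_map.2 ⟨uu,
            Finset.mem_toList.2 (Finset.mem_filter.2 ⟨Finset.mem_univ uu, hcuv⟩), rfl⟩
      · -- Imp θ ψ
        intro M x hx
        rw [disjList_sem] at hx
        obtain ⟨θ', hθ', hxθ⟩ := hx
        obtain ⟨w, _, rfl⟩ := List.mem_map.1 hθ'
        have hχw : x ∈ (χ w).sem M := hxθ.1
        have hcw : x ∈ (conjw w).sem M := hxθ.2
        set vv : ↥V₂ → Bool := fun p => pb (x ∈ M.τ p.val) with hvv
        have hvv_spec : ∀ p : ↥V₂, (x ∈ M.τ p.val ↔ vv p = true) := by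
          intro p; rw [hvv]; exact (pb_iff _).symm
        have hvc : vcompat vv w := by
          rw [hvcd]
          intro p h2 hw'
          have h1 : x ∈ M.τ p ↔ w ⟨p, hw'⟩ = true := by
            rw [hχ] at hχw
            exact (mem_tpF _ w M x).1 hχw ⟨p, hw'⟩
          exact Bool.eq_iff_iff.2 ((hvv_spec ⟨p, h2⟩).symm.trans h1)
        have hrv : x ∈ (r vv).sem M := by
          rw [hconjw, conjList_sem] at hcw
          exact hcw (r vv) (List.mem_map.2 ⟨vv,
            Finset.mem_toList.2 (Finset.mem_filter.2 ⟨Finset.mem_univ vv, hvc⟩), rfl⟩)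
        have h1 := hρ2 vv ((hr_sem M x vv).1 hrv)
        rw [hextψ vv] at h1
        exact hψ_pull M x vv hvv_spec h1

end UIP
/-- If `L(Λ)` has one-step interpolation then `L(Λ)` has uniform interpolation; moreover for
every finite `V₁ ⊆ V`, `V₀ ⊆ V₁` and `φ` over `V₁`, the uniform `V₀`-interpolant `ρ` can be
chosen with `rk ρ ≤ rk φ`. -/
theorem one_step_interpolation_implies_uniform_interpolation
    {F : Type u ⥤ Type u} (S : ModalSig F) (V : Type) [Countable V]
    (hos : OneStepInterpolation S) :
    ∀ (V₁ : Set V), V₁.Finite → ∀ V₀ ⊆ V₁,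
      ∀ φ : MForm S V, MForm.varsIn V₁ φ →
        ∃ ρ : MForm S V, MForm.varsIn V₀ ρ ∧ MForm.rk ρ ≤ MForm.rk φ ∧
          (∀ M : CModel F V, MForm.sem M φ ⊆ MForm.sem M ρ) ∧
          ∀ V₂ : Set V, V₁ ∩ V₂ ⊆ V₀ →
            ∀ ψ : MForm S V, MForm.varsIn V₂ ψ →
              (∀ M : CModel F V, MForm.sem M φ ⊆ MForm.sem M ψ) →
              (∀ M : CModel F V, MForm.sem M ρ ⊆ MForm.sem M ψ) := by
  classical
  intro V₁ hV₁ V₀ hV₀ φ hφ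
  have hfV₀ : V₀.Finite := hV₁.subset hV₀
  set n : ℕ := MForm.rk φ with hn
  set Θ : Set (MForm S V) :=
    {θ | θ ∈ (UIP.Gset V₀ hfV₀ n).1 ∧ UIP.Imp φ θ} with hΘ
  have hΘfin : Θ.Finite := (UIP.Gset V₀ hfV₀ n).2.subset (fun θ hθ => hθ.1)
  set l : List (MForm S V) := hΘfin.toFinset.toList with hl
  have hmeml : ∀ θ : MForm S V, θ ∈ l ↔ θ ∈ Θ := by
    intro θ
    rw [hl, Finset.mem_toList, Set.Finite.mem_toFinset]
  refine ⟨UIP.conjList l, ?_, ?_, ?_, ?_⟩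
  · apply UIP.conjList_vars
    intro θ hθ
    exact (UIP.Gset_mem V₀ hfV₀ n θ ((hmeml θ).1 hθ).1).1
  · apply UIP.conjList_rk
    intro θ hθ
    exact (UIP.Gset_mem V₀ hfV₀ n θ ((hmeml θ).1 hθ).1).2
  · intro M x hx
    rw [UIP.conjList_sem]
    intro θ hθ
    exact ((hmeml θ).1 hθ).2 M hx
  · intro V₂ hV₂ ψ hψ himp M x hx
    have hf2' : (UIP.varsOf ψ).Finite := UIP.varsOf_finite ψ
    obtain ⟨θ, ht1, ht2, ht3, ht4⟩ := UIP.interp hos (min (MForm.rk φ) (MForm.rk ψ))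
      V₁ (UIP.varsOf ψ) hV₁ hf2' φ ψ hφ (UIP.varsIn_varsOf ψ) (le_refl _) himp
    have hθv0 : MForm.varsIn V₀ θ := by
      refine UIP.varsIn_mono ?_ θ ht1
      intro p hp
      exact hV₂ ⟨hp.1, UIP.varsOf_subset ψ hψ hp.2⟩
    have hθrk : MForm.rk θ ≤ n := ht2.trans (min_le_left _ _)
    obtain ⟨θ', hmem, heqv⟩ := UIP.Gcomplete V₀ hfV₀ θ n hθv0 hθrk
    have hθ'Θ : θ' ∈ Θ := by
      refine ⟨hmem, ?_⟩
      intro M' x' hx'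
      have := ht3 M' hx'
      rwa [heqv M'] at this
    have hx' : x ∈ MForm.sem M θ' :=
      (UIP.conjList_sem M x l).1 hx θ' ((hmeml θ').2 hθ'Θ)
    have hxθ : x ∈ MForm.sem M θ := by
      rw [heqv M]
      exact hx'
    exact ht4 M hxθ
end

section
/- Neighbourhood logic (classical modal logic) has uniform interpolation: take F := N (the neighbourhood functor) and the single unary modality □ interpreted by ⟦□⟧_X(A) := {α ∈ N X | A ∈ α}, over a countable set V of propositional variables. Then for every finite V₁ ⊆ V, every V₀ ⊆ V₁ and every formula φ over V₁ there exists a formula ρ over V₀ with ⊨ φ → ρ such that ⊨ ρ → ψ for every V₂ ⊆ V with V₁ ∩ V₂ ⊆ V₀ and every formula ψ over V₂ with ⊨ φ → ψ. -/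
universe u

/-- Formulas of neighbourhood logic (classical modal logic) over variables `V`. -/
inductive NForm (V : Type) : Type
  | var : V → NForm V
  | bot : NForm V
  | neg : NForm V → NForm V
  | and : NForm V → NForm V → NForm V
  | box : NForm V → NForm V

/-- The formula mentions only variables from `V₀`. -/
def NForm.varsIn {V : Type} (V₀ : Set V) : NForm V → Prop
  | .var v => v ∈ V₀
  | .bot => True
  | .neg φ => φ.varsIn V₀
  | .and φ ψ => φ.varsIn V₀ ∧ ψ.varsIn V₀
  | .box φ => φ.varsIn V₀

/-- A neighbourhood model: a coalgebra `ξ : X → N X` for the neighbourhood functor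
`N X = Set (Set X)` together with a valuation. -/
structure NModel (V : Type) : Type (u + 1) where
  X : Type u
  ξ : X → Set (Set X)
  τ : V → Set X

/-- The extension of a formula in a neighbourhood model; `x ⊨ □φ` iff `⟦φ⟧ ∈ ξ x`. -/
def NForm.sem {V : Type} (M : NModel.{u} V) : NForm V → Set M.X
  | .var v => M.τ v
  | .bot => ∅
  | .neg φ => (φ.sem M)ᶜ
  | .and φ ψ => φ.sem M ∩ ψ.sem M
  | .box φ => {x | φ.sem M ∈ M.ξ x}

namespace UIP

def depth {V : Type} : NForm V → ℕ
  | .var _ => 0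
  | .bot => 0
  | .neg φ => depth φ
  | .and φ ψ => max (depth φ) (depth ψ)
  | .box φ => depth φ + 1

def S (W : Type) : ℕ → Type
  | 0 => Set W
  | n+1 => Set W × Set (Set (S W n))

def sval {W : Type} : {n : ℕ} → S W n → Set W
  | 0, s => s
  | _+1, s => s.1

def pm {A B : Type} (g : A → B) : {n : ℕ} → S B n → S A n
  | 0, s => g ⁻¹' s
  | _+1, s => (g ⁻¹' s.1, {B' | pm g ⁻¹' B' ∈ s.2})

def re {W : Type} : (j k : ℕ) → S W j → S W k
  | _, 0, t => sval t
  | 0, k+1, t => ((t : Set W), (∅ : Set (Set (S W k))))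
  | j+1, k+1, t => (t.1, {B | {u : S W j | re j k u ∈ B} ∈ t.2})

instance SFinite (W : Type) [Finite W] : ∀ n, Finite (S W n)
  | 0 => inferInstanceAs (Finite (Set W))
  | n+1 => by haveI := SFinite W n; exact inferInstanceAs (Finite (Set W × Set (Set (S W n))))

theorem sval_pm {A B : Type} (g : A → B) : ∀ {n : ℕ} (s : S B n), sval (pm g s) = g ⁻¹' sval s
  | 0, s => rfl
  | _+1, s => rfl

theorem sval_re {W : Type} : ∀ (j k : ℕ) (s : S W j), sval (re j k s) = sval s
  | _, 0, s => by cases ‹ℕ› <;> rfl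
  | 0, _+1, s => rfl
  | _+1, _+1, s => rfl

theorem re_self {W : Type} : ∀ (k : ℕ) (s : S W k), re k k s = s
  | 0, s => rfl
  | k+1, s => by
      show (s.1, _) = s
      have : {B : Set (S W k) | {u : S W k | re k k u ∈ B} ∈ s.2} = s.2 := by
        ext B
        have : {u : S W k | re k k u ∈ B} = B := by ext u; simp [re_self k u]
        simp [this]
      exact Prod.ext rfl this

theorem pm_pm {A' A B : Type} (g : A' → A) (h : A → B) :
    ∀ {n : ℕ} (s : S B n), pm g (pm h s) = pm (h ∘ g) s
  | 0, s => rfl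
  | n+1, s => by
      show (_, _) = (_, _)
      refine Prod.ext rfl ?_
      show {B' | pm g ⁻¹' B' ∈ {C | pm h ⁻¹' C ∈ s.2}} = {B' | pm (h ∘ g) ⁻¹' B' ∈ s.2}
      ext B'
      have : pm h ⁻¹' (pm g ⁻¹' B') = pm (h ∘ g) ⁻¹' B' := by
        ext u; simp [pm_pm g h u]
      simp only [Set.mem_setOf_eq, this]

theorem re_pm {A B : Type} (g : A → B) : ∀ (j k : ℕ) (s : S B j),
    re j k (pm g s) = pm g (re j k s)
  | j, 0, s => by cases j <;> exact (sval_pm g s)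
  | 0, k+1, s => by
      show ((_ : Set A), (∅ : Set (Set (S A k)))) = (g ⁻¹' _, {B' | pm g ⁻¹' B' ∈ (∅ : Set (Set (S B k)))})
      refine Prod.ext rfl ?_
      show (∅ : Set (Set (S A k))) = {B' | pm g ⁻¹' B' ∈ (∅ : Set (Set (S B k)))}
      ext B'; simp
  | j+1, k+1, s => by
      show (_, _) = (_, _)
      refine Prod.ext rfl ?_
      show {C : Set (S A k) | {u : S A j | re j k u ∈ C} ∈ {B' : Set (S A j) | pm g ⁻¹' B' ∈ s.2}}
         = {B' : Set (S A k) | pm g ⁻¹' B' ∈ {C : Set (S B k) | {u : S B j | re j k u ∈ C} ∈ s.2}}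
      ext C
      have h2 : pm g ⁻¹' {u : S A j | re j k u ∈ C} = {u : S B j | re j k u ∈ pm g ⁻¹' C} := by
        ext u
        show re j k (pm g u) ∈ C ↔ pm g (re j k u) ∈ C
        rw [re_pm g j k u]
      simp only [Set.mem_setOf_eq, h2]

theorem pm_surj {A B : Type} {g : A → B} (hg : Function.Injective g) :
    ∀ {n : ℕ}, Function.Surjective (pm g (n := n))
  | 0 => fun s => ⟨g '' s, by show g ⁻¹' (g '' s) = s; exact Set.preimage_image_eq _ hg⟩
  | n+1 => fun s => by
      obtain ⟨f, hf⟩ : ∃ f : Set B, g ⁻¹' f = s.1 := ⟨g '' s.1, Set.preimage_image_eq _ hg⟩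
      refine ⟨(f, {C | ∃ B' ∈ s.2, C = pm g ⁻¹' B'}), ?_⟩
      show ((_ : Set A), _) = s
      refine Prod.ext hf ?_
      show {B' | pm g ⁻¹' B' ∈ {C | ∃ B'' ∈ s.2, C = pm g ⁻¹' B''}} = s.2
      have hinj : Function.Injective (Set.preimage (pm g (n := n))) :=
        Set.preimage_injective.mpr (pm_surj hg)
      ext B'
      constructor
      · rintro ⟨B'', hB'', h⟩; rwa [hinj h]
      · intro h; exact ⟨B', h, rfl⟩

theorem re_surj {W : Type} : ∀ (j k : ℕ), k ≤ j → Function.Surjective (re (W := W) j k)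
  | j, 0, _ => by
      cases j with
      | zero => exact fun s => ⟨s, rfl⟩
      | succ j => exact fun s => ⟨(s, ∅), rfl⟩
  | 0, k+1, h => by omega
  | j+1, k+1, h => fun s => by
      have hs : Function.Surjective (re (W := W) j k) := re_surj j k (by omega)
      have hinj : Function.Injective (Set.preimage (re (W := W) j k)) :=
        Set.preimage_injective.mpr hs
      refine ⟨(s.1, {C | ∃ B ∈ s.2, C = re j k ⁻¹' B}), ?_⟩
      show (s.1, _) = s
      refine Prod.ext rfl ?_
      show {B | {u : S W j | re j k u ∈ B} ∈ {C | ∃ B' ∈ s.2, C = re j k ⁻¹' B'}} = s.2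
      ext B
      constructor
      · rintro ⟨B', hB', h⟩
        have : re j k ⁻¹' B = re j k ⁻¹' B' := h
        rwa [hinj this]
      · intro h; exact ⟨B, h, rfl⟩


variable {V : Type}

/-- the `n`-jet of a state: its observable behaviour up to depth `n`,
relative to the variables indexed by `ι : W → V` -/
def jet (M : NModel.{u} V) {W : Type} (ι : W → V) : (n : ℕ) → M.X → S W n
  | 0, x => {w | x ∈ M.τ (ι w)}
  | n+1, x => ({w | x ∈ M.τ (ι w)}, {B | jet M ι n ⁻¹' B ∈ M.ξ x})

theorem sval_jet (M : NModel.{u} V) {W : Type} (ι : W → V) :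
    ∀ (n : ℕ) (x : M.X), sval (jet M ι n x) = {w | x ∈ M.τ (ι w)}
  | 0, x => rfl
  | _+1, x => rfl

theorem pm_jet (M : NModel.{u} V) {W W' : Type} (ι : W → V) (g : W' → W) :
    ∀ (n : ℕ) (x : M.X), pm g (jet M ι n x) = jet M (ι ∘ g) n x
  | 0, x => rfl
  | n+1, x => by
      show (_, _) = (_, _)
      refine Prod.ext rfl ?_
      show {B | pm g ⁻¹' B ∈ {C | jet M ι n ⁻¹' C ∈ M.ξ x}} = {B | jet M (ι ∘ g) n ⁻¹' B ∈ M.ξ x}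
      ext B
      have : jet M ι n ⁻¹' (pm g ⁻¹' B) = jet M (ι ∘ g) n ⁻¹' B := by
        ext y
        show pm g (jet M ι n y) ∈ B ↔ _
        rw [pm_jet M ι g n y]
        exact Iff.rfl
      simp only [Set.mem_setOf_eq, this]

theorem re_jet (M : NModel.{u} V) {W : Type} (ι : W → V) :
    ∀ (m n : ℕ), n ≤ m → ∀ (x : M.X), re m n (jet M ι m x) = jet M ι n x
  | m, 0, _, x => by
      have := sval_jet M ι m x
      cases m <;> exact this
  | 0, n+1, h, x => by omega
  | m+1, n+1, h, x => by
      show (_, _) = (_, _)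
      refine Prod.ext rfl ?_
      show {B | {u : S W m | re m n u ∈ B} ∈ {C | jet M ι m ⁻¹' C ∈ M.ξ x}}
         = {B | jet M ι n ⁻¹' B ∈ M.ξ x}
      ext B
      have : jet M ι m ⁻¹' {u : S W m | re m n u ∈ B} = jet M ι n ⁻¹' B := by
        ext y
        show re m n (jet M ι m y) ∈ B ↔ _
        rw [re_jet M ι m n (by omega) y]
        exact Iff.rfl
      simp only [Set.mem_setOf_eq, this]

/-- semantics of formulas on jets -/
def tsem (U : Set V) : (n : ℕ) → NForm V → Set (S (↥U) n)
  | n, .var v => {s | ∃ h : v ∈ U, (⟨v, h⟩ : ↥U) ∈ sval s}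
  | _, .bot => ∅
  | n, .neg χ => (tsem U n χ)ᶜ
  | n, .and χ₁ χ₂ => tsem U n χ₁ ∩ tsem U n χ₂
  | 0, .box _ => ∅
  | n+1, .box χ => {s | tsem U n χ ∈ s.2}

/-- truth of a formula of depth ≤ n depends only on the n-jet -/
theorem sem_eq_jet (M : NModel.{u} V) (U : Set V) :
    ∀ (χ : NForm V), χ.varsIn U → ∀ (n : ℕ), depth χ ≤ n →
      NForm.sem M χ = jet M (fun w : ↥U => ↑w) n ⁻¹' tsem U n χ
  | .var v, hv, n, _ => by
      have ht : tsem U n (NForm.var v) = {s | ∃ h : v ∈ U, (⟨v, h⟩ : ↥U) ∈ sval s} := by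
        simp [tsem]
      ext x
      rw [Set.mem_preimage, ht]
      show x ∈ M.τ v ↔ ∃ h : v ∈ U, (⟨v, h⟩ : ↥U) ∈ sval (jet M (fun w : ↥U => ↑w) n x)
      rw [sval_jet]
      exact ⟨fun h => ⟨hv, h⟩, fun h => h.2⟩
  | .bot, hv, n, _ => by
      have ht : tsem U n NForm.bot = ∅ := by simp [tsem]
      rw [ht]
      ext x; simp [NForm.sem]
  | .neg χ, hv, n, hd => by
      have ih := sem_eq_jet M U χ hv n hd
      have ht : tsem U n (NForm.neg χ) = (tsem U n χ)ᶜ := by simp [tsem]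
      show (NForm.sem M χ)ᶜ = _
      rw [ih, ht, Set.preimage_compl]
  | .and χ₁ χ₂, hv, n, hd => by
      have h1 := sem_eq_jet M U χ₁ hv.1 n (le_trans (le_max_left _ _) hd)
      have h2 := sem_eq_jet M U χ₂ hv.2 n (le_trans (le_max_right _ _) hd)
      have ht : tsem U n (NForm.and χ₁ χ₂) = tsem U n χ₁ ∩ tsem U n χ₂ := by simp [tsem]
      show NForm.sem M χ₁ ∩ NForm.sem M χ₂ = _
      rw [h1, h2, ht, Set.preimage_inter]
  | .box χ, hv, n, hd => by
      match n, hd with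
      | 0, hd => exact absurd hd (by simp [depth])
      | n+1, hd =>
        have ih := sem_eq_jet M U χ hv n (by exact Nat.succ_le_succ_iff.mp hd)
        have ht : tsem U (n+1) (NForm.box χ) = {s | tsem U n χ ∈ s.2} := by simp [tsem]
        rw [ht]
        ext x
        rw [Set.mem_preimage]
        show NForm.sem M χ ∈ M.ξ x ↔ tsem U n χ ∈ {B | jet M _ n ⁻¹' B ∈ M.ξ x}
        rw [ih]
        exact Iff.rfl


variable {V : Type}

/-- canonical model over a set `U` of variables: realizes every jet -/
def CModel (U : Set V) : NModel.{u} V where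
  X := ULift.{u} (Σ k, S (↥U) k)
  ξ p := match p.down with
    | ⟨0, _⟩ => ∅
    | ⟨j+1, t⟩ => {A | {u : S (↥U) j | (ULift.up ⟨j, u⟩) ∈ A} ∈ t.2}
  τ v := {p | ∃ h : v ∈ U, (⟨v, h⟩ : ↥U) ∈ sval p.down.2}

theorem jet_CModel (U : Set V) :
    ∀ (k j : ℕ) (t : S (↥U) j),
      jet (CModel.{u} U) (fun w : ↥U => ↑w) k (ULift.up ⟨j, t⟩) = re j k t
  | 0, j, t => by
      show {w : ↥U | _ ∈ (CModel.{u} U).τ ↑w} = _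
      have h1 : {w : ↥U | (ULift.up ⟨j, t⟩ : (CModel.{u} U).X) ∈ (CModel.{u} U).τ ↑w} = sval t := by
        ext w
        show (∃ h : ↑w ∈ U, (⟨↑w, h⟩ : ↥U) ∈ sval t) ↔ w ∈ sval t
        constructor
        · rintro ⟨h, hw⟩; exact hw
        · intro hw; exact ⟨w.2, hw⟩
      refine h1.trans ?_
      cases j <;> rfl
  | k+1, j, t => by
      show (_, _) = re j (k+1) t
      have hval : {w : ↥U | (ULift.up ⟨j, t⟩ : (CModel.{u} U).X) ∈ (CModel.{u} U).τ ↑w} = sval t := by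
        ext w
        show (∃ h : ↑w ∈ U, (⟨↑w, h⟩ : ↥U) ∈ sval t) ↔ w ∈ sval t
        constructor
        · rintro ⟨h, hw⟩; exact hw
        · intro hw; exact ⟨w.2, hw⟩
      match j, t with
      | 0, t =>
        refine Prod.ext hval ?_
        show {B | jet (CModel.{u} U) _ k ⁻¹' B ∈ (∅ : Set (Set (CModel.{u} U).X))} = ∅
        ext B; simp
      | j+1, t =>
        refine Prod.ext hval ?_
        show {B | jet (CModel.{u} U) _ k ⁻¹' B ∈ (CModel.{u} U).ξ (ULift.up ⟨j+1, t⟩)}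
           = {B | {u : S (↥U) j | re j k u ∈ B} ∈ t.2}
        ext B
        show {u : S (↥U) j | (ULift.up ⟨j, u⟩ : (CModel.{u} U).X) ∈ jet (CModel.{u} U) _ k ⁻¹' B} ∈ t.2
           ↔ {u : S (↥U) j | re j k u ∈ B} ∈ t.2
        have : {u : S (↥U) j | (ULift.up ⟨j, u⟩ : (CModel.{u} U).X) ∈ jet (CModel.{u} U) (fun w : ↥U => ↑w) k ⁻¹' B}
             = {u : S (↥U) j | re j k u ∈ B} := by
          ext u
          show jet (CModel.{u} U) _ k (ULift.up ⟨j, u⟩) ∈ B ↔ _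
          rw [jet_CModel U k j u]
          exact Iff.rfl
        rw [this]

theorem realize (U : Set V) (k : ℕ) (s : S (↥U) k) :
    jet (CModel.{u} U) (fun w : ↥U => ↑w) k (ULift.up ⟨k, s⟩) = s := by
  rw [jet_CModel U k k s, re_self]



section Amalg
variable {A B W W₀ : Type} {a : A → W} {b : B → W} {i : W₀ → A} {i' : W₀ → B}

theorem glue_a (ha : Function.Injective a)
    (hpull : ∀ x y, a x = b y → ∃ z, i z = x ∧ i' z = y)
    {t : Set A} {f : Set B} (hc : i ⁻¹' t = i' ⁻¹' f) :
    a ⁻¹' (a '' t ∪ b '' f) = t := by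
  ext x
  simp only [Set.mem_preimage, Set.mem_union, Set.mem_image]
  constructor
  · rintro (⟨x', hx', he⟩ | ⟨y, hy, he⟩)
    · rwa [← ha he]
    · obtain ⟨z, hz1, hz2⟩ := hpull x y he.symm
      have : z ∈ i' ⁻¹' f := by simpa [hz2] using hy
      rw [← hc] at this
      simpa [hz1] using this
  · intro hx; exact Or.inl ⟨x, hx, rfl⟩

theorem glue_b (hb : Function.Injective b)
    (hpull : ∀ x y, a x = b y → ∃ z, i z = x ∧ i' z = y)
    {t : Set A} {f : Set B} (hc : i ⁻¹' t = i' ⁻¹' f) :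
    b ⁻¹' (a '' t ∪ b '' f) = f := by
  ext y
  simp only [Set.mem_preimage, Set.mem_union, Set.mem_image]
  constructor
  · rintro (⟨x, hx, he⟩ | ⟨y', hy', he⟩)
    · obtain ⟨z, hz1, hz2⟩ := hpull x y he
      have : z ∈ i ⁻¹' t := by simpa [hz1] using hx
      rw [hc] at this
      simpa [hz2] using this
    · rwa [← hb he]
  · intro hy; exact Or.inr ⟨y, hy, rfl⟩

theorem amalg (ha : Function.Injective a) (hb : Function.Injective b)
    (hpull : ∀ x y, a x = b y → ∃ z, i z = x ∧ i' z = y)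
    (hcomm : a ∘ i = b ∘ i') :
    ∀ (n m : ℕ), n ≤ m → ∀ (t : S A n) (r : S B m),
      pm i t = re m n (pm i' r) →
      ∃ s : S W m, pm a (re m n s) = t ∧ pm b s = r
  | 0, 0, _, t, r, hc => by
      refine ⟨(a '' t ∪ b '' r : Set W), ?_, ?_⟩
      · exact glue_a ha hpull hc
      · exact glue_b hb hpull hc
  | 0, m+1, _, t, r, hc => by
      have hc' : i ⁻¹' t = i' ⁻¹' r.1 := hc
      refine ⟨(a '' t ∪ b '' r.1, {C | ∃ B' ∈ r.2, C = pm b ⁻¹' B'}), ?_, ?_⟩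
      · exact glue_a ha hpull hc'
      · show ((_ : Set B), _) = r
        refine Prod.ext (glue_b hb hpull hc') ?_
        show {B' | pm b ⁻¹' B' ∈ {C | ∃ B'' ∈ r.2, C = pm b ⁻¹' B''}} = r.2
        have hinj : Function.Injective (Set.preimage (pm b (n := m))) :=
          Set.preimage_injective.mpr (pm_surj hb)
        ext B'
        constructor
        · rintro ⟨B'', hB'', h⟩; rwa [hinj h]
        · intro h; exact ⟨B', h, rfl⟩
  | n+1, 0, h, _, _, _ => by omega
  | n+1, m+1, h, t, r, hc => by
      have hnm : n ≤ m := by omega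
      set P₁ : S W m → S A n := fun u => pm a (re m n u) with hP₁
      have hP₁surj : Function.Surjective P₁ :=
        Function.Surjective.comp (pm_surj ha) (re_surj m n hnm)
      have hbsurj : Function.Surjective (pm b (n := m)) := pm_surj hb
      have hbpre : Function.Injective (Set.preimage (pm b (n := m))) :=
        Set.preimage_injective.mpr hbsurj
      have hP₁pre : Function.Injective (Set.preimage P₁) :=
        Set.preimage_injective.mpr hP₁surj
      -- components of the compatibility hypothesis
      have hfst : i ⁻¹' t.1 = i' ⁻¹' r.1 := congrArg Prod.fst hc
      have hsnd : {B₀ : Set (S W₀ n) | pm i ⁻¹' B₀ ∈ t.2}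
          = {B₀ : Set (S W₀ n) | {v : S B m | re m n (pm i' v) ∈ B₀} ∈ r.2} := by
        have h1 : (pm i t).2 = (re (m+1) (n+1) (pm i' r)).2 := congrArg Prod.snd hc
        calc {B₀ : Set (S W₀ n) | pm i ⁻¹' B₀ ∈ t.2} = (pm i t).2 := rfl
          _ = (re (m+1) (n+1) (pm i' r)).2 := h1
          _ = {B₀ : Set (S W₀ n) | {v : S B m | re m n (pm i' v) ∈ B₀} ∈ r.2} := by
              ext B₀
              show {u : S W₀ m | re m n u ∈ B₀} ∈ (pm i' r).2 ↔ _
              show pm i' ⁻¹' {u : S W₀ m | re m n u ∈ B₀} ∈ r.2 ↔ _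
              exact Iff.rfl
      -- the cross consistency lemma
      have cross : ∀ (D : Set (S A n)) (D' : Set (S B m)),
          P₁ ⁻¹' D = pm b ⁻¹' D' → (D ∈ t.2 ↔ D' ∈ r.2) := by
        intro D D' hBB
        set Q : S W m → S W₀ n := fun u => pm i (P₁ u) with hQ
        have e1 : ∀ w : S W m, pm i (P₁ w) = pm (a ∘ i) (re m n w) := fun w => pm_pm i a _
        have e2 : ∀ w : S W m, re m n (pm i' (pm b w)) = pm (a ∘ i) (re m n w) := by
          intro w
          rw [pm_pm i' b, re_pm (b ∘ i'), hcomm]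
        have hdet : ∀ u u' : S W m, Q u = Q u' → (u ∈ P₁ ⁻¹' D ↔ u' ∈ P₁ ⁻¹' D) := by
          intro u u' hQu
          have hcompat : pm i (P₁ u) = re m n (pm i' (pm b u')) := by
            rw [e1 u, e2 u', ← e1 u, ← e1 u']
            exact hQu
          obtain ⟨v, hv1, hv2⟩ := amalg ha hb hpull hcomm n m hnm (P₁ u) (pm b u') hcompat
          have hv1' : P₁ v = P₁ u := hv1
          have huv : v ∈ P₁ ⁻¹' D ↔ u ∈ P₁ ⁻¹' D := by
            show P₁ v ∈ D ↔ P₁ u ∈ D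
            rw [hv1']
          have huv' : v ∈ P₁ ⁻¹' D ↔ u' ∈ P₁ ⁻¹' D := by
            rw [hBB]
            show pm b v ∈ D' ↔ pm b u' ∈ D'
            rw [hv2]
          rw [← huv, huv']
        set B₀ : Set (S W₀ n) := {w₀ | ∃ u ∈ P₁ ⁻¹' D, Q u = w₀} with hB₀
        have hQpre : Q ⁻¹' B₀ = P₁ ⁻¹' D := by
          ext u'
          constructor
          · rintro ⟨u, hu, hQu⟩
            exact (hdet u u' hQu).mp hu
          · intro hu; exact ⟨u', hu, rfl⟩
        have hBeq : D = pm i ⁻¹' B₀ := by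
          apply hP₁pre
          rw [← hQpre]
          rfl
        have hB'eq : D' = {v : S B m | re m n (pm i' v) ∈ B₀} := by
          apply hbpre
          rw [← hBB, ← hQpre]
          ext u
          show pm i (P₁ u) ∈ B₀ ↔ re m n (pm i' (pm b u)) ∈ B₀
          rw [e1 u, e2 u]
        rw [hBeq, hB'eq]
        constructor
        · intro hmem
          have : B₀ ∈ {C : Set (S W₀ n) | pm i ⁻¹' C ∈ t.2} := hmem
          rw [hsnd] at this
          exact this
        · intro hmem
          have : B₀ ∈ {B₀ : Set (S W₀ n) | {v : S B m | re m n (pm i' v) ∈ B₀} ∈ r.2} := hmem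
          rw [← hsnd] at this
          exact this
      -- the amalgamated jet
      refine ⟨(a '' t.1 ∪ b '' r.1,
        {C | ∃ D ∈ t.2, C = P₁ ⁻¹' D} ∪ {C | ∃ D' ∈ r.2, C = pm b ⁻¹' D'}), ?_, ?_⟩
      · show ((_ : Set A), _) = t
        refine Prod.ext (glue_a ha hpull hfst) ?_
        show {D : Set (S A n) | pm a ⁻¹' D ∈ {B₀' : Set (S W n) | {u : S W m | re m n u ∈ B₀'} ∈ _}} = t.2
        ext D
        show {u : S W m | re m n u ∈ pm a ⁻¹' D} ∈
            ({C | ∃ D'' ∈ t.2, C = P₁ ⁻¹' D''} ∪ {C | ∃ D' ∈ r.2, C = pm b ⁻¹' D'}) ↔ D ∈ t.2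
        have hPB : {u : S W m | re m n u ∈ pm a ⁻¹' D} = P₁ ⁻¹' D := rfl
        rw [hPB]
        constructor
        · rintro (⟨D'', hB'', hE⟩ | ⟨D', hB', hE⟩)
          · rwa [hP₁pre hE]
          · exact (cross D D' hE).mpr hB'
        · intro hB; exact Or.inl ⟨D, hB, rfl⟩
      · show ((_ : Set B), _) = r
        refine Prod.ext (glue_b hb hpull hfst) ?_
        show {D' : Set (S B m) | pm b ⁻¹' D' ∈ _} = r.2
        ext D'
        show pm b ⁻¹' D' ∈
            ({C | ∃ D'' ∈ t.2, C = P₁ ⁻¹' D''} ∪ {C | ∃ D'' ∈ r.2, C = pm b ⁻¹' D''}) ↔ D' ∈ r.2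
        constructor
        · rintro (⟨D'', hB'', hE⟩ | ⟨D'', hB'', hE⟩)
          · exact (cross D'' D' hE.symm).mp hB''
          · rwa [hbpre hE]
        · intro hB; exact Or.inr ⟨D', hB, rfl⟩

end Amalg

open Classical
variable {V : Type}

def bigAnd : List (NForm V) → NForm V
  | [] => .neg .bot
  | χ :: l => .and χ (bigAnd l)

def bigOr (l : List (NForm V)) : NForm V := .neg (bigAnd (l.map .neg))

theorem depth_bigAnd {n : ℕ} : ∀ (l : List (NForm V)),
    (∀ χ ∈ l, depth χ ≤ n) → depth (bigAnd l) ≤ n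
  | [], _ => by simp [bigAnd, depth]
  | χ :: l, h => by
      show max (depth χ) (depth (bigAnd l)) ≤ n
      exact max_le (h χ (by simp)) (depth_bigAnd l (fun χ' hχ' => h χ' (by simp [hχ'])))

theorem depth_bigOr {n : ℕ} (l : List (NForm V)) (h : ∀ χ ∈ l, depth χ ≤ n) :
    depth (bigOr l) ≤ n := by
  show depth (bigAnd (l.map .neg)) ≤ n
  refine depth_bigAnd _ ?_
  intro χ hχ
  obtain ⟨χ', hχ', rfl⟩ := List.mem_map.mp hχ
  exact h χ' hχ'

theorem varsIn_bigAnd {U : Set V} : ∀ (l : List (NForm V)),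
    (∀ χ ∈ l, NForm.varsIn U χ) → NForm.varsIn U (bigAnd l)
  | [], _ => trivial
  | χ :: l, h =>
      ⟨h χ (by simp), varsIn_bigAnd l fun χ' hχ' => h χ' (by simp [hχ'])⟩

theorem varsIn_bigOr {U : Set V} (l : List (NForm V)) (h : ∀ χ ∈ l, NForm.varsIn U χ) :
    NForm.varsIn U (bigOr l) := by
  show NForm.varsIn U (bigAnd (l.map .neg))
  refine varsIn_bigAnd _ ?_
  intro χ hχ
  obtain ⟨χ', hχ', rfl⟩ := List.mem_map.mp hχ
  exact h χ' hχ'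

theorem tsem_neg (U : Set V) (n : ℕ) (χ : NForm V) : tsem U n (NForm.neg χ) = (tsem U n χ)ᶜ := by
  simp [tsem]

theorem tsem_bigAnd (U : Set V) (n : ℕ) : ∀ (l : List (NForm V)),
    tsem U n (bigAnd l) = {s | ∀ χ ∈ l, s ∈ tsem U n χ}
  | [] => by
      show tsem U n (NForm.neg .bot) = _
      rw [tsem_neg]
      have h2 : tsem U n (NForm.bot) = ∅ := by simp [tsem]
      rw [h2]; ext s; simp
  | χ :: l => by
      have h1 : tsem U n (NForm.and χ (bigAnd l)) = tsem U n χ ∩ tsem U n (bigAnd l) := by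
        simp [tsem]
      show tsem U n (NForm.and χ (bigAnd l)) = _
      rw [h1, tsem_bigAnd U n l]
      ext s
      simp only [Set.mem_inter_iff, Set.mem_setOf_eq, List.mem_cons]
      constructor
      · rintro ⟨h1, h2⟩ χ' (rfl | h')
        · exact h1
        · exact h2 χ' h'
      · intro h
        exact ⟨h χ (Or.inl rfl), fun χ' h' => h χ' (Or.inr h')⟩

theorem tsem_bigOr (U : Set V) (n : ℕ) (l : List (NForm V)) :
    tsem U n (bigOr l) = {s | ∃ χ ∈ l, s ∈ tsem U n χ} := by
  show tsem U n (NForm.neg (bigAnd (l.map .neg))) = _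
  rw [tsem_neg, tsem_bigAnd]
  ext s
  simp only [Set.mem_compl_iff, Set.mem_setOf_eq, List.mem_map, not_forall]
  constructor
  · rintro ⟨χ, hχ, hs⟩
    obtain ⟨χ', hχ', rfl⟩ := hχ
    rw [tsem_neg] at hs
    exact ⟨χ', hχ', not_not.mp (fun hc => hs hc)⟩
  · rintro ⟨χ', hχ', hs⟩
    refine ⟨NForm.neg χ', ⟨χ', hχ', rfl⟩, ?_⟩
    rw [tsem_neg]
    exact fun hc => hc hs

theorem tsem_var (U : Set V) (n : ℕ) (w : ↥U) :
    tsem U n (NForm.var ↑w) = {s | w ∈ sval s} := by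
  have h : tsem U n (NForm.var (↑w : V)) =
      {s | ∃ h : (↑w : V) ∈ U, (⟨↑w, h⟩ : ↥U) ∈ sval s} := by simp [tsem]
  rw [h]
  ext s
  simp only [Set.mem_setOf_eq]
  constructor
  · rintro ⟨h, hs⟩
    rwa [Subtype.coe_eta] at hs
  · intro hs
    exact ⟨w.2, by rwa [Subtype.coe_eta]⟩

/-- list of all elements of a finite type -/
noncomputable def listAll (X : Type) [Finite X] : List X :=
  (@Finset.univ X (Fintype.ofFinite X)).toList

theorem mem_listAll (X : Type) [Finite X] (x : X) : x ∈ listAll X := by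
  rw [listAll, Finset.mem_toList]
  exact @Finset.mem_univ X (Fintype.ofFinite X) x

/-- the formula of depth ≤ k over `U` describing the valuation part of a jet -/
noncomputable def valForm (U : Set V) [Finite ↥U] {k : ℕ} (s : S ↥U k) : NForm V :=
  bigAnd ((listAll ↥U).map (fun w =>
    if w ∈ sval s then NForm.var ↑w else .neg (.var ↑w)))

/-- the formula of depth ≤ k over `U` describing a single jet at level `k` -/
noncomputable def delta (U : Set V) [Finite ↥U] : (k : ℕ) → S ↥U k → NForm V
  | 0, s => valForm U s
  | k+1, s => .and (valForm U s)
      (bigAnd ((listAll (Set (S ↥U k))).map (fun B =>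
        if B ∈ s.2
        then NForm.box (bigOr (((listAll (S ↥U k)).filter (fun u => u ∈ B)).map (delta U k)))
        else .neg (.box (bigOr (((listAll (S ↥U k)).filter (fun u => u ∈ B)).map (delta U k)))))))

/-- the formula of depth ≤ k over `U` describing a set of jets at level `k` -/
noncomputable def setDef (U : Set V) [Finite ↥U] (k : ℕ) (B : Set (S ↥U k)) : NForm V :=
  bigOr (((listAll (S ↥U k)).filter (fun u => u ∈ B)).map (delta U k))


open Classical
variable {V : Type}

theorem varsIn_valForm (U : Set V) [Finite ↥U] {k : ℕ} (s : S ↥U k) :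
    NForm.varsIn U (valForm U s) := by
  refine varsIn_bigAnd _ ?_
  intro χ hχ
  obtain ⟨w, _, rfl⟩ := List.mem_map.mp hχ
  by_cases h : w ∈ sval s <;> simp [h, NForm.varsIn, w.2]

theorem depth_valForm (U : Set V) [Finite ↥U] {k : ℕ} (s : S ↥U k) {n : ℕ} :
    depth (valForm U s) ≤ n := by
  refine depth_bigAnd _ ?_
  intro χ hχ
  obtain ⟨w, _, rfl⟩ := List.mem_map.mp hχ
  by_cases h : w ∈ sval s <;> simp [h, depth]

theorem tsem_valForm (U : Set V) [Finite ↥U] {k : ℕ} (s : S ↥U k) :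
    tsem U k (valForm U s) = {s' | sval s' = sval s} := by
  rw [valForm, tsem_bigAnd]
  ext s'
  simp only [Set.mem_setOf_eq]
  constructor
  · intro h
    ext w
    have := h _ (List.mem_map.mpr ⟨w, mem_listAll _ w, rfl⟩)
    by_cases hw : w ∈ sval s
    · simp only [if_pos hw] at this
      rw [tsem_var] at this
      exact ⟨fun _ => hw, fun _ => this⟩
    · simp only [if_neg hw] at this
      rw [tsem_neg, tsem_var] at this
      exact ⟨fun hh => absurd hh this, fun hh => absurd hh hw⟩
  · intro h χ hχ
    obtain ⟨w, _, rfl⟩ := List.mem_map.mp hχ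
    by_cases hw : w ∈ sval s
    · simp only [if_pos hw]
      rw [tsem_var]
      show w ∈ sval s'
      rw [h]; exact hw
    · simp only [if_neg hw]
      rw [tsem_neg, tsem_var]
      show w ∉ sval s'
      rw [h]; exact hw

theorem varsIn_delta (U : Set V) [Finite ↥U] : ∀ (k : ℕ) (s : S ↥U k),
    NForm.varsIn U (delta U k s)
  | 0, s => varsIn_valForm U s
  | k+1, s => by
      refine ⟨varsIn_valForm U s, varsIn_bigAnd _ ?_⟩
      intro χ hχ
      obtain ⟨B, _, rfl⟩ := List.mem_map.mp hχ
      have hin : NForm.varsIn U (bigOr (((listAll (S ↥U k)).filter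
          (fun u => u ∈ B)).map (delta U k))) := by
        refine varsIn_bigOr _ ?_
        intro χ' hχ'
        obtain ⟨u, _, rfl⟩ := List.mem_map.mp hχ'
        exact varsIn_delta U k u
      by_cases h : B ∈ s.2
      · rw [if_pos h]; exact hin
      · rw [if_neg h]; exact hin

theorem depth_delta (U : Set V) [Finite ↥U] : ∀ (k : ℕ) (s : S ↥U k),
    depth (delta U k s) ≤ k
  | 0, s => depth_valForm U s
  | k+1, s => by
      refine max_le (depth_valForm U s) (depth_bigAnd _ ?_)
      intro χ hχ
      obtain ⟨B, _, rfl⟩ := List.mem_map.mp hχ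
      have hd : depth (bigOr (((listAll (S ↥U k)).filter
          (fun u => u ∈ B)).map (delta U k))) ≤ k := by
        refine depth_bigOr _ ?_
        intro χ' hχ'
        obtain ⟨u, _, rfl⟩ := List.mem_map.mp hχ'
        exact depth_delta U k u
      by_cases h : B ∈ s.2
      · rw [if_pos h]; exact Nat.succ_le_succ hd
      · rw [if_neg h]; exact Nat.succ_le_succ hd

theorem tsem_delta (U : Set V) [Finite ↥U] : ∀ (k : ℕ) (s : S ↥U k),
    tsem U k (delta U k s) = {s}
  | 0, s => by
      show tsem U 0 (valForm U s) = {s}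
      rw [tsem_valForm]
      ext s'
      exact ⟨fun h => h, fun h => h⟩
  | k+1, s => by
      have hsd : ∀ B : Set (S ↥U k),
          tsem U k (bigOr (((listAll (S ↥U k)).filter (fun u => u ∈ B)).map (delta U k))) = B := by
        intro B
        rw [tsem_bigOr]
        ext u
        simp only [Set.mem_setOf_eq]
        constructor
        · rintro ⟨χ, hχ, hu⟩
          obtain ⟨u', hu', rfl⟩ := List.mem_map.mp hχ
          rw [tsem_delta U k u', Set.mem_singleton_iff] at hu
          subst hu
          exact of_decide_eq_true (List.mem_filter.mp hu').2
        · intro hu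
          refine ⟨delta U k u, List.mem_map.mpr ⟨u, List.mem_filter.mpr
            ⟨mem_listAll _ u, decide_eq_true hu⟩, rfl⟩, ?_⟩
          rw [tsem_delta U k u]
          rfl
      have hbox : ∀ B : Set (S ↥U k),
          tsem U (k+1) (NForm.box (bigOr (((listAll (S ↥U k)).filter
            (fun u => u ∈ B)).map (delta U k))))
          = {s' : S ↥U (k+1) | B ∈ s'.2} := by
        intro B
        have h1 : tsem U (k+1) (NForm.box (bigOr (((listAll (S ↥U k)).filter
            (fun u => u ∈ B)).map (delta U k))))
            = {s' : S ↥U (k+1) | tsem U k (bigOr (((listAll (S ↥U k)).filter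
              (fun u => u ∈ B)).map (delta U k))) ∈ s'.2} := by simp [tsem]
        rw [h1, hsd B]
      show tsem U (k+1) (NForm.and (valForm U s) (bigAnd ((listAll (Set (S ↥U k))).map (fun B =>
        if B ∈ s.2
        then NForm.box (bigOr (((listAll (S ↥U k)).filter (fun u => u ∈ B)).map (delta U k)))
        else .neg (.box (bigOr (((listAll (S ↥U k)).filter (fun u => u ∈ B)).map (delta U k)))))))) = {s}
      have h1 : ∀ X : NForm V, tsem U (k+1) (NForm.and (valForm U s) X)
          = tsem U (k+1) (valForm U s) ∩ tsem U (k+1) X := by intro X; simp [tsem]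
      rw [h1, tsem_valForm, tsem_bigAnd]
      ext s'
      simp only [Set.mem_inter_iff, Set.mem_setOf_eq, Set.mem_singleton_iff]
      constructor
      · rintro ⟨hval, hB⟩
        have h2 : s'.2 = s.2 := by
          ext B
          have hmem := hB _ (List.mem_map.mpr ⟨B, mem_listAll _ B, rfl⟩)
          by_cases hBmem : B ∈ s.2
          · simp only [if_pos hBmem] at hmem
            rw [hbox B] at hmem
            exact ⟨fun _ => hBmem, fun _ => hmem⟩
          · simp only [if_neg hBmem] at hmem
            rw [tsem_neg, hbox B] at hmem
            exact ⟨fun hh => absurd hh hmem, fun hh => absurd hh hBmem⟩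
        exact Prod.ext hval h2
      · rintro rfl
        refine ⟨rfl, ?_⟩
        intro χ hχ
        obtain ⟨B, _, rfl⟩ := List.mem_map.mp hχ
        by_cases hBmem : B ∈ s'.2
        · simp only [if_pos hBmem]
          rw [hbox B]; exact hBmem
        · simp only [if_neg hBmem]
          rw [tsem_neg, hbox B]; exact hBmem

theorem varsIn_setDef (U : Set V) [Finite ↥U] (k : ℕ) (B : Set (S ↥U k)) :
    NForm.varsIn U (setDef U k B) := by
  refine varsIn_bigOr _ ?_
  intro χ hχ
  obtain ⟨u, _, rfl⟩ := List.mem_map.mp hχ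
  exact varsIn_delta U k u

theorem depth_setDef (U : Set V) [Finite ↥U] (k : ℕ) (B : Set (S ↥U k)) :
    depth (setDef U k B) ≤ k := by
  refine depth_bigOr _ ?_
  intro χ hχ
  obtain ⟨u, _, rfl⟩ := List.mem_map.mp hχ
  exact depth_delta U k u

theorem tsem_setDef (U : Set V) [Finite ↥U] (k : ℕ) (B : Set (S ↥U k)) :
    tsem U k (setDef U k B) = B := by
  rw [setDef, tsem_bigOr]
  ext u
  simp only [Set.mem_setOf_eq]
  constructor
  · rintro ⟨χ, hχ, hu⟩
    obtain ⟨u', hu', rfl⟩ := List.mem_map.mp hχ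
    rw [tsem_delta U k u', Set.mem_singleton_iff] at hu
    subst hu
    exact of_decide_eq_true (List.mem_filter.mp hu').2
  · intro hu
    refine ⟨delta U k u, List.mem_map.mpr ⟨u, List.mem_filter.mpr
      ⟨mem_listAll _ u, decide_eq_true hu⟩, rfl⟩, ?_⟩
    rw [tsem_delta U k u]
    rfl

end UIP

open UIP

/-- Neighbourhood logic (classical modal logic) has uniform interpolation. -/
theorem nbhd_uniform_interpolation (V : Type) [Countable V]
    (V₁ : Set V) (hV₁ : V₁.Finite) (V₀ : Set V) (hV₀ : V₀ ⊆ V₁)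
    (φ : NForm V) (hφ : NForm.varsIn V₁ φ) :
    ∃ ρ : NForm V, NForm.varsIn V₀ ρ ∧
      (∀ M : NModel.{u} V, NForm.sem M φ ⊆ NForm.sem M ρ) ∧
      ∀ V₂ : Set V, V₁ ∩ V₂ ⊆ V₀ →
        ∀ ψ : NForm V, NForm.varsIn V₂ ψ →
          (∀ M : NModel.{u} V, NForm.sem M φ ⊆ NForm.sem M ψ) →
          (∀ M : NModel.{u} V, NForm.sem M ρ ⊆ NForm.sem M ψ) := by
  haveI : Finite ↥V₀ := (hV₁.subset hV₀).to_subtype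
  set n := depth φ with hn
  -- inclusion of V₀ into V₁
  set i₀ : ↥V₀ → ↥V₁ := fun w => ⟨↑w, hV₀ w.2⟩ with hi₀
  set T : Set (S ↥V₁ n) := tsem V₁ n φ with hT
  set B₀ : Set (S ↥V₀ n) := pm i₀ '' T with hB₀
  refine ⟨setDef V₀ n B₀, varsIn_setDef V₀ n B₀, ?_, ?_⟩
  · -- φ entails ρ
    intro M x hx
    have hsφ : NForm.sem M φ = jet M (fun w : ↥V₁ => ↑w) n ⁻¹' T :=
      sem_eq_jet M V₁ φ hφ n le_rfl
    have hsρ : NForm.sem M (setDef V₀ n B₀)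
        = jet M (fun w : ↥V₀ => ↑w) n ⁻¹' B₀ := by
      rw [sem_eq_jet M V₀ (setDef V₀ n B₀) (varsIn_setDef V₀ n B₀) n (depth_setDef V₀ n B₀),
        tsem_setDef]
    rw [hsρ]
    rw [hsφ] at hx
    show jet M (fun w : ↥V₀ => ↑w) n x ∈ B₀
    have hj : jet M (fun w : ↥V₀ => ↑w) n x = pm i₀ (jet M (fun w : ↥V₁ => ↑w) n x) := by
      rw [pm_jet]
      rfl
    rw [hj]
    exact ⟨_, hx, rfl⟩
  · -- ρ entails every ψ entailed by φ
    intro V₂ h12 ψ hψv hent M x hx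
    set m := max n (depth ψ) with hm
    have hnm : n ≤ m := le_max_left _ _
    -- from x ⊨ ρ get a compatible φ-jet
    have hsρ : NForm.sem M (setDef V₀ n B₀)
        = jet M (fun w : ↥V₀ => ↑w) n ⁻¹' B₀ := by
      rw [sem_eq_jet M V₀ (setDef V₀ n B₀) (varsIn_setDef V₀ n B₀) n (depth_setDef V₀ n B₀),
        tsem_setDef]
    rw [hsρ] at hx
    obtain ⟨t, htT, hti⟩ := hx
    -- set up the amalgamation
    set W := ↥(V₁ ∪ V₂) with hW
    set a : ↥V₁ → W := fun w => ⟨↑w, Or.inl w.2⟩ with ha'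
    set b : ↥V₂ → W := fun w => ⟨↑w, Or.inr w.2⟩ with hb'
    set i : ↥(V₁ ∩ V₂) → ↥V₁ := fun w => ⟨↑w, w.2.1⟩ with hi'
    set i' : ↥(V₁ ∩ V₂) → ↥V₂ := fun w => ⟨↑w, w.2.2⟩ with hii'
    have ha : Function.Injective a := fun u v h =>
      Subtype.ext (congrArg (Subtype.val : W → V) h)
    have hb : Function.Injective b := fun u v h =>
      Subtype.ext (congrArg (Subtype.val : W → V) h)
    have hpull : ∀ (x : ↥V₁) (y : ↥V₂), a x = b y → ∃ z, i z = x ∧ i' z = y := by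
      intro u v h
      have hval : (↑u : V) = ↑v := congrArg (Subtype.val : W → V) h
      refine ⟨⟨↑u, u.2, by rw [hval]; exact v.2⟩, Subtype.ext rfl, Subtype.ext hval⟩
    have hcomm : a ∘ i = b ∘ i' := by
      funext w
      exact Subtype.ext rfl
    -- the V₁∩V₂ ⊆ V₀ inclusion
    set j : ↥(V₁ ∩ V₂) → ↥V₀ := fun w => ⟨↑w, h12 w.2⟩ with hj'
    set r : S ↥V₂ m := jet M (fun w : ↥V₂ => ↑w) m x with hr
    -- compatibility of t and r over V₁ ∩ V₂
    have hcompat : pm i t = re m n (pm i' r) := by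
      have h1 : pm i t = pm j (pm i₀ t) := by
        rw [pm_pm]
        congr 1
      have h2 : pm j (pm i₀ t) = jet M (fun w : ↥(V₁ ∩ V₂) => ↑w) n x := by
        rw [hti, pm_jet]
        rfl
      have h3 : pm i' r = jet M (fun w : ↥(V₁ ∩ V₂) => ↑w) m x := by
        rw [hr, pm_jet]
        rfl
      rw [h1, h2, h3, re_jet M _ m n hnm]
    obtain ⟨s, hs1, hs2⟩ := amalg ha hb hpull hcomm n m hnm t r hcompat
    -- realize the amalgamated jet in the canonical model
    set C := CModel.{u} (V₁ ∪ V₂) with hC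
    set c : C.X := ULift.up ⟨m, s⟩ with hc
    have hreal : jet C (fun w : W => ↑w) m c = s := realize (V₁ ∪ V₂) m s
    -- c satisfies φ
    have hcφ : c ∈ NForm.sem C φ := by
      rw [sem_eq_jet C V₁ φ hφ n le_rfl]
      show jet C (fun w : ↥V₁ => ↑w) n c ∈ T
      have e1 : jet C (fun w : ↥V₁ => ↑w) n c = pm a (re m n (jet C (fun w : W => ↑w) m c)) := by
        rw [re_jet C _ m n hnm, pm_jet]
        rfl
      rw [e1, hreal, hs1]
      exact htT
    -- hence c satisfies ψ
    have hcψ : c ∈ NForm.sem C ψ := hent C hcφ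
    rw [sem_eq_jet C V₂ ψ hψv m (le_max_right _ _)] at hcψ
    have e2 : jet C (fun w : ↥V₂ => ↑w) m c = pm b (jet C (fun w : W => ↑w) m c) := by
      rw [pm_jet]
      rfl
    rw [Set.mem_preimage, e2, hreal, hs2, hr] at hcψ
    rw [sem_eq_jet M V₂ ψ hψv m (le_max_right _ _)]
    exact hcψ
end
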